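/- arXiv:2311.10916 — 9 statements merged into one kernel-verified Lean document; each statement's English description precedes it below -/
import Mathlib

section
/- For every set 𝔘 of diagonals of the repetitive polygon Π^p, the set 𝔘^⊥ is a Ptolemy diagram. -/
/-- A potential diagonal of the repetitive polygon `Π^p`: a triple `(i, j, k)`
with `i, j : ℤ` and region index `k : ZMod p`. -/
abbrev Diag (p : ℕ) := ℤ × ℤ × ZMod p

/-- `(i,j,k)` is a diagonal of the repetitive polygon `Π^p`, where `N = n + 3`:
`1 ≤ i < j ≤ N`, `j - i ≥ 2` and `(i,j) ≠ (1,N)`. -/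
def IsDiagonal (n p : ℕ) (d : Diag p) : Prop :=
  1 ≤ d.1 ∧ d.1 < d.2.1 ∧ d.2.1 ≤ (n : ℤ) + 3 ∧ 2 ≤ d.2.1 - d.1 ∧
    ¬(d.1 = 1 ∧ d.2.1 = (n : ℤ) + 3)

/-- Two diagonals `X = (i,j,ℓ)` and `Y = (i',j',ℓ')` of `Π^p` cross. -/
def Crosses (p : ℕ) (X Y : Diag p) : Prop :=
  (X.2.2 = Y.2.2 ∧
    ((X.1 < Y.1 ∧ Y.1 < X.2.1 ∧ X.2.1 < Y.2.1) ∨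
     (Y.1 < X.1 ∧ X.1 < Y.2.1 ∧ Y.2.1 < X.2.1))) ∨
  (Y.2.2 = X.2.2 + 1 ∧ Y.1 < X.1 ∧ X.1 < Y.2.1 ∧ Y.2.1 < X.2.1) ∨
  (X.2.2 = Y.2.2 + 1 ∧ X.1 < Y.1 ∧ Y.1 < X.2.1 ∧ X.2.1 < Y.2.1)

/-- A set `U` of diagonals of `Π^p` is a Ptolemy diagram: conditions (Pt1), (Pt2), (Pt3)
for every pair of crossing diagonals `X = (i,j,ℓ)`, `Y = (i',j',ℓ')` in `U`. -/
def IsPtolemy (n p : ℕ) (U : Set (Diag p)) : Prop :=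
  ∀ X ∈ U, ∀ Y ∈ U, Crosses p X Y →
    ((X.2.2 = Y.2.2 ∧
        ((X.1 < Y.1 ∧ Y.1 < X.2.1 ∧ X.2.1 < Y.2.1) ∨
         (Y.1 < X.1 ∧ X.1 < Y.2.1 ∧ Y.2.1 < X.2.1))) →
      (IsDiagonal n p (Y.1, X.2.1, X.2.2) → (Y.1, X.2.1, X.2.2) ∈ U) ∧
      (IsDiagonal n p (X.1, Y.2.1, X.2.2) → (X.1, Y.2.1, X.2.2) ∈ U)) ∧
    ((Y.2.2 = X.2.2 + 1 ∧ Y.1 < X.1 ∧ X.1 < Y.2.1 ∧ Y.2.1 < X.2.1) →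
      (IsDiagonal n p (Y.1, X.1, Y.2.2) → (Y.1, X.1, Y.2.2) ∈ U) ∧
      (IsDiagonal n p (Y.2.1, X.2.1, X.2.2) → (Y.2.1, X.2.1, X.2.2) ∈ U)) ∧
    ((X.2.2 = Y.2.2 + 1 ∧ X.1 < Y.1 ∧ Y.1 < X.2.1 ∧ X.2.1 < Y.2.1) →
      (IsDiagonal n p (X.1, Y.1, X.2.2) → (X.1, Y.1, X.2.2) ∈ U) ∧
      (IsDiagonal n p (X.2.1, Y.2.1, Y.2.2) → (X.2.1, Y.2.1, Y.2.2) ∈ U))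

/-- The set `𝔘^⊥`: diagonals `u = (i',j',ℓ')` such that every `v = (i,j,ℓ) ∈ 𝔘` crossing `u`
satisfies `(ℓ = ℓ' ∧ i < i' < j < j')` or `(ℓ = ℓ' - 1 ∧ i' < i < j' < j)`. -/
def rPerp (n p : ℕ) (U : Set (Diag p)) : Set (Diag p) :=
  {u | IsDiagonal n p u ∧ ∀ v ∈ U, Crosses p v u →
    (v.2.2 = u.2.2 ∧ v.1 < u.1 ∧ u.1 < v.2.1 ∧ v.2.1 < u.2.1) ∨
    (u.2.2 = v.2.2 + 1 ∧ u.1 < v.1 ∧ v.1 < u.2.1 ∧ u.2.1 < v.2.1)}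

/-- The set `^⊥𝔘`: diagonals `u = (i',j',ℓ')` such that every `v = (i,j,ℓ) ∈ 𝔘` crossing `u`
satisfies `(ℓ = ℓ' ∧ i' < i < j' < j)` or `(ℓ = ℓ' + 1 ∧ i < i' < j < j')`. -/
def lPerp (n p : ℕ) (U : Set (Diag p)) : Set (Diag p) :=
  {u | IsDiagonal n p u ∧ ∀ v ∈ U, Crosses p v u →
    (v.2.2 = u.2.2 ∧ u.1 < v.1 ∧ v.1 < u.2.1 ∧ u.2.1 < v.2.1) ∨
    (v.2.2 = u.2.2 + 1 ∧ v.1 < u.1 ∧ u.1 < v.2.1 ∧ v.2.1 < u.2.1)}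


section Aux

variable {n p : ℕ}

lemma zmod_ne_add_one (hp : 2 ≤ p) (k : ZMod p) : k ≠ k + 1 := by
  haveI : Fact (1 < p) := ⟨by omega⟩
  intro h
  have h0 : (0 : ZMod p) = 1 := by
    nth_rewrite 1 [← add_zero k] at h
    exact add_left_cancel h
  exact one_ne_zero h0.symm

lemma pt1core (hp : 2 ≤ p) (U : Set (Diag p)) (a b c d : ℤ) (ℓ : ZMod p)
    (hX : ((a, b, ℓ) : Diag p) ∈ rPerp n p U)
    (hY : ((c, d, ℓ) : Diag p) ∈ rPerp n p U)
    (h1 : a < c) (h2 : c < b) (h3 : b < d) :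
    (IsDiagonal n p (c, b, ℓ) → ((c, b, ℓ) : Diag p) ∈ rPerp n p U) ∧
    (IsDiagonal n p (a, d, ℓ) → ((a, d, ℓ) : Diag p) ∈ rPerp n p U) := by
  obtain ⟨hXd, hXg⟩ := hX
  obtain ⟨hYd, hYg⟩ := hY
  have hne := zmod_ne_add_one hp
  constructor
  · intro hd
    refine ⟨hd, ?_⟩
    rintro ⟨x, y, k⟩ hv hcr
    have hXg' : Crosses p ((x, y, k) : Diag p) ((a, b, ℓ) : Diag p) →
        (k = ℓ ∧ x < a ∧ a < y ∧ y < b) ∨ (ℓ = k + 1 ∧ a < x ∧ x < b ∧ b < y) :=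
      fun h => hXg (x, y, k) hv h
    have hYg' : Crosses p ((x, y, k) : Diag p) ((c, d, ℓ) : Diag p) →
        (k = ℓ ∧ x < c ∧ c < y ∧ y < d) ∨ (ℓ = k + 1 ∧ c < x ∧ x < d ∧ d < y) :=
      fun h => hYg (x, y, k) hv h
    have hcr' : (k = ℓ ∧ ((x < c ∧ c < y ∧ y < b) ∨ (c < x ∧ x < b ∧ b < y))) ∨
        (ℓ = k + 1 ∧ c < x ∧ x < b ∧ b < y) ∨ (k = ℓ + 1 ∧ x < c ∧ c < y ∧ y < b) := hcr
    show (k = ℓ ∧ x < c ∧ c < y ∧ y < b) ∨ (ℓ = k + 1 ∧ c < x ∧ x < b ∧ b < y)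
    rcases hcr' with ⟨hk, ⟨p1, p2, p3⟩ | ⟨p1, p2, p3⟩⟩ | ⟨hk, p1, p2, p3⟩ | ⟨hk, p1, p2, p3⟩
    · exact Or.inl ⟨hk, p1, p2, p3⟩
    · have hax : a < x := by omega
      rcases hXg' (Or.inl ⟨hk, Or.inr ⟨hax, p2, p3⟩⟩) with ⟨_, q1, _⟩ | ⟨q, _⟩
      · omega
      · rw [hk] at q; exact absurd q (hne ℓ)
    · exact Or.inr ⟨hk, p1, p2, p3⟩
    · have hyd : y < d := by omega
      rcases hYg' (Or.inr (Or.inr ⟨hk, p1, p2, hyd⟩)) with ⟨q, _⟩ | ⟨_, q1, _⟩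
      · rw [q] at hk; exact absurd hk (hne ℓ)
      · omega
  · intro hd
    refine ⟨hd, ?_⟩
    rintro ⟨x, y, k⟩ hv hcr
    have hXg' : Crosses p ((x, y, k) : Diag p) ((a, b, ℓ) : Diag p) →
        (k = ℓ ∧ x < a ∧ a < y ∧ y < b) ∨ (ℓ = k + 1 ∧ a < x ∧ x < b ∧ b < y) :=
      fun h => hXg (x, y, k) hv h
    have hYg' : Crosses p ((x, y, k) : Diag p) ((c, d, ℓ) : Diag p) →
        (k = ℓ ∧ x < c ∧ c < y ∧ y < d) ∨ (ℓ = k + 1 ∧ c < x ∧ x < d ∧ d < y) :=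
      fun h => hYg (x, y, k) hv h
    have hcr' : (k = ℓ ∧ ((x < a ∧ a < y ∧ y < d) ∨ (a < x ∧ x < d ∧ d < y))) ∨
        (ℓ = k + 1 ∧ a < x ∧ x < d ∧ d < y) ∨ (k = ℓ + 1 ∧ x < a ∧ a < y ∧ y < d) := hcr
    show (k = ℓ ∧ x < a ∧ a < y ∧ y < d) ∨ (ℓ = k + 1 ∧ a < x ∧ x < d ∧ d < y)
    rcases hcr' with ⟨hk, ⟨p1, p2, p3⟩ | ⟨p1, p2, p3⟩⟩ | ⟨hk, p1, p2, p3⟩ | ⟨hk, p1, p2, p3⟩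
    · exact Or.inl ⟨hk, p1, p2, p3⟩
    · by_cases hxb : x < b
      · have hby : b < y := by omega
        rcases hXg' (Or.inl ⟨hk, Or.inr ⟨p1, hxb, hby⟩⟩) with ⟨_, q1, _⟩ | ⟨q, _⟩
        · omega
        · rw [hk] at q; exact absurd q (hne ℓ)
      · have hcx : c < x := by omega
        rcases hYg' (Or.inl ⟨hk, Or.inr ⟨hcx, p2, p3⟩⟩) with ⟨_, q1, _⟩ | ⟨q, _⟩
        · omega
        · rw [hk] at q; exact absurd q (hne ℓ)
    · exact Or.inr ⟨hk, p1, p2, p3⟩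
    · by_cases hyb : y < b
      · rcases hXg' (Or.inr (Or.inr ⟨hk, p1, p2, hyb⟩)) with ⟨q, _⟩ | ⟨_, q1, _⟩
        · rw [q] at hk; exact absurd hk (hne ℓ)
        · omega
      · have hxc : x < c := by omega
        have hcy : c < y := by omega
        rcases hYg' (Or.inr (Or.inr ⟨hk, hxc, hcy, p3⟩)) with ⟨q, _⟩ | ⟨_, q1, _⟩
        · rw [q] at hk; exact absurd hk (hne ℓ)
        · omega

lemma pt2core (hp : 2 ≤ p) (U : Set (Diag p)) (a b c d : ℤ) (ℓ : ZMod p)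
    (hX : ((a, b, ℓ) : Diag p) ∈ rPerp n p U)
    (hY : ((c, d, ℓ + 1) : Diag p) ∈ rPerp n p U)
    (h1 : c < a) (h2 : a < d) (h3 : d < b) :
    (IsDiagonal n p (c, a, ℓ + 1) → ((c, a, ℓ + 1) : Diag p) ∈ rPerp n p U) ∧
    (IsDiagonal n p (d, b, ℓ) → ((d, b, ℓ) : Diag p) ∈ rPerp n p U) := by
  obtain ⟨hXd, hXg⟩ := hX
  obtain ⟨hYd, hYg⟩ := hY
  have hne := zmod_ne_add_one hp
  constructor
  · intro hd
    refine ⟨hd, ?_⟩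
    rintro ⟨x, y, k⟩ hv hcr
    have hXg' : Crosses p ((x, y, k) : Diag p) ((a, b, ℓ) : Diag p) →
        (k = ℓ ∧ x < a ∧ a < y ∧ y < b) ∨ (ℓ = k + 1 ∧ a < x ∧ x < b ∧ b < y) :=
      fun h => hXg (x, y, k) hv h
    have hYg' : Crosses p ((x, y, k) : Diag p) ((c, d, ℓ + 1) : Diag p) →
        (k = ℓ + 1 ∧ x < c ∧ c < y ∧ y < d) ∨ (ℓ + 1 = k + 1 ∧ c < x ∧ x < d ∧ d < y) :=
      fun h => hYg (x, y, k) hv h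
    have hcr' : (k = ℓ + 1 ∧ ((x < c ∧ c < y ∧ y < a) ∨ (c < x ∧ x < a ∧ a < y))) ∨
        (ℓ + 1 = k + 1 ∧ c < x ∧ x < a ∧ a < y) ∨
        (k = (ℓ + 1) + 1 ∧ x < c ∧ c < y ∧ y < a) := hcr
    show (k = ℓ + 1 ∧ x < c ∧ c < y ∧ y < a) ∨ (ℓ + 1 = k + 1 ∧ c < x ∧ x < a ∧ a < y)
    rcases hcr' with ⟨hk, ⟨p1, p2, p3⟩ | ⟨p1, p2, p3⟩⟩ | ⟨hk, p1, p2, p3⟩ | ⟨hk, p1, p2, p3⟩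
    · exact Or.inl ⟨hk, p1, p2, p3⟩
    · by_cases hyd : y ≤ d
      · have hyb : y < b := by omega
        rcases hXg' (Or.inr (Or.inr ⟨hk, p2, p3, hyb⟩)) with ⟨q, _⟩ | ⟨_, q1, _⟩
        · rw [q] at hk; exact absurd hk (hne ℓ)
        · omega
      · have hxd : x < d := by omega
        have hdy : d < y := by omega
        rcases hYg' (Or.inl ⟨hk, Or.inr ⟨p1, hxd, hdy⟩⟩) with ⟨_, q1, _⟩ | ⟨q, _⟩
        · omega
        · rw [hk] at q; exact absurd q (hne (ℓ + 1))
    · exact Or.inr ⟨hk, p1, p2, p3⟩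
    · have hyd : y < d := by omega
      rcases hYg' (Or.inr (Or.inr ⟨hk, p1, p2, hyd⟩)) with ⟨q, _⟩ | ⟨_, q1, _⟩
      · rw [q] at hk; exact absurd hk (hne (ℓ + 1))
      · omega
  · intro hd
    refine ⟨hd, ?_⟩
    rintro ⟨x, y, k⟩ hv hcr
    have hXg' : Crosses p ((x, y, k) : Diag p) ((a, b, ℓ) : Diag p) →
        (k = ℓ ∧ x < a ∧ a < y ∧ y < b) ∨ (ℓ = k + 1 ∧ a < x ∧ x < b ∧ b < y) :=
      fun h => hXg (x, y, k) hv h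
    have hYg' : Crosses p ((x, y, k) : Diag p) ((c, d, ℓ + 1) : Diag p) →
        (k = ℓ + 1 ∧ x < c ∧ c < y ∧ y < d) ∨ (ℓ + 1 = k + 1 ∧ c < x ∧ x < d ∧ d < y) :=
      fun h => hYg (x, y, k) hv h
    have hcr' : (k = ℓ ∧ ((x < d ∧ d < y ∧ y < b) ∨ (d < x ∧ x < b ∧ b < y))) ∨
        (ℓ = k + 1 ∧ d < x ∧ x < b ∧ b < y) ∨ (k = ℓ + 1 ∧ x < d ∧ d < y ∧ y < b) := hcr
    show (k = ℓ ∧ x < d ∧ d < y ∧ y < b) ∨ (ℓ = k + 1 ∧ d < x ∧ x < b ∧ b < y)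
    rcases hcr' with ⟨hk, ⟨p1, p2, p3⟩ | ⟨p1, p2, p3⟩⟩ | ⟨hk, p1, p2, p3⟩ | ⟨hk, p1, p2, p3⟩
    · exact Or.inl ⟨hk, p1, p2, p3⟩
    · have hax : a < x := by omega
      rcases hXg' (Or.inl ⟨hk, Or.inr ⟨hax, p2, p3⟩⟩) with ⟨_, q1, _⟩ | ⟨q, _⟩
      · omega
      · rw [hk] at q; exact absurd q (hne ℓ)
    · exact Or.inr ⟨hk, p1, p2, p3⟩
    · by_cases hxa : x < a
      · have hay : a < y := by omega
        rcases hXg' (Or.inr (Or.inr ⟨hk, hxa, hay, p3⟩)) with ⟨q, _⟩ | ⟨_, q1, _⟩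
        · rw [q] at hk; exact absurd hk (hne ℓ)
        · omega
      · have hcx : c < x := by omega
        rcases hYg' (Or.inl ⟨hk, Or.inr ⟨hcx, p1, p2⟩⟩) with ⟨_, q1, _⟩ | ⟨q, _⟩
        · omega
        · rw [hk] at q; exact absurd (add_right_cancel q) (hne ℓ)

end Aux

/-- For every set `𝔘` of diagonals of `Π^p`, the set `𝔘^⊥` is a Ptolemy diagram. -/
theorem rPerp_isPtolemy (n p : ℕ) (hn : 1 ≤ n) (hp : 2 ≤ p)
    (U : Set (Diag p)) (hU : ∀ d ∈ U, IsDiagonal n p d) :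
    IsPtolemy n p (rPerp n p U) := by
  rintro ⟨a, b, ℓ⟩ hXm ⟨c, d, m⟩ hYm hcr
  refine ⟨?_, ?_, ?_⟩
  · rintro ⟨hk, h | h⟩ <;> subst hk
    · exact pt1core hp U a b c d ℓ hXm hYm h.1 h.2.1 h.2.2
    · have := pt1core hp U c d a b ℓ hYm hXm h.1 h.2.1 h.2.2
      exact ⟨this.2, this.1⟩
  · rintro ⟨hk, h⟩
    subst hk
    exact pt2core hp U a b c d ℓ hXm hYm h.1 h.2.1 h.2.2
  · rintro ⟨hk, h⟩
    subst hk
    exact pt2core hp U c d a b m hYm hXm h.1 h.2.1 h.2.2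
end

section
/- Let 𝔘 be a set of diagonals of the repetitive polygon Π^p and let (i,j,ℓ) be a diagonal lying in ^⊥(𝔘^⊥), where 1 ≤ i < j ≤ N. If i ≠ 1, then the diagonal (i−1,i+1,ℓ) does not lie in 𝔘^⊥. -/
/-- If `(i,j,ℓ) ∈ ^⊥(𝔘^⊥)` and `i ≠ 1`, then `(i-1,i+1,ℓ) ∉ 𝔘^⊥`. -/
theorem not_mem_rPerp_of_left (n p : ℕ) (hn : 1 ≤ n) (hp : 2 ≤ p)
    (U : Set (Diag p)) (hU : ∀ d ∈ U, IsDiagonal n p d)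
    (i j : ℤ) (ℓ : ZMod p) (hij : 1 ≤ i ∧ i < j ∧ j ≤ (n : ℤ) + 3)
    (h : (i, j, ℓ) ∈ lPerp n p (rPerp n p U)) (hi : i ≠ 1) :
    (i - 1, i + 1, ℓ) ∉ rPerp n p U := by
  intro hw
  obtain ⟨hd, hcond⟩ := h
  obtain ⟨_, _, _, h2, _⟩ := hd
  simp only at h2
  have hcr : Crosses p (i - 1, i + 1, ℓ) (i, j, ℓ) :=
    Or.inl ⟨rfl, Or.inl ⟨show i - 1 < i by linarith, show i < i + 1 by linarith,
      show i + 1 < j by linarith⟩⟩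
  rcases hcond _ hw hcr with ⟨_, h1, _⟩ | ⟨he, _⟩
  · simp only at h1; linarith
  · haveI : Fact (1 < p) := ⟨hp⟩
    simp only at he
    exact one_ne_zero ((left_eq_add).mp he)
end

section
/- Let 𝔘 be a set of diagonals of the repetitive polygon Π^p and let (i,j,ℓ) be a diagonal lying in ^⊥(𝔘^⊥), where 1 ≤ i < j ≤ N. If j ≠ N, then the diagonal (j−1,j+1,ℓ−1) does not lie in 𝔘^⊥. -/
/-- If `(i,j,ℓ) ∈ ^⊥(𝔘^⊥)` and `j ≠ N`, then `(j-1,j+1,ℓ-1) ∉ 𝔘^⊥`. -/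
theorem not_mem_rPerp_of_right (n p : ℕ) (hn : 1 ≤ n) (hp : 2 ≤ p)
    (U : Set (Diag p)) (hU : ∀ d ∈ U, IsDiagonal n p d)
    (i j : ℤ) (ℓ : ZMod p) (hij : 1 ≤ i ∧ i < j ∧ j ≤ (n : ℤ) + 3)
    (h : (i, j, ℓ) ∈ lPerp n p (rPerp n p U)) (hj : j ≠ (n : ℤ) + 3) :
    (j - 1, j + 1, ℓ - 1) ∉ rPerp n p U := by
  intro hv
  obtain ⟨hd, hall⟩ := h
  have hji : 2 ≤ j - i := hd.2.2.2.1
  have hcross : Crosses p (j - 1, j + 1, ℓ - 1) (i, j, ℓ) := by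
    right; left
    refine ⟨by simp, by dsimp; linarith, by dsimp; linarith, by dsimp; linarith⟩
  haveI : Fact (1 < p) := ⟨hp⟩
  have key := hall _ hv hcross
  rcases key with ⟨h1, _⟩ | ⟨_, h2, _⟩
  · dsimp at h1; exact one_ne_zero (sub_eq_self.mp h1)
  · dsimp at h2; linarith
end

section
/- Let 𝔘 be a Ptolemy diagram in the repetitive polygon Π^p, let a be a vertex (1 ≤ a ≤ N) and ℓ a region index, and suppose that 𝔘 contains a diagonal of the form (a,b',ℓ) with a < b' and a diagonal of the form (c',a,ℓ+1) with c' < a. Let b be the maximal integer with (a,b,ℓ) ∈ 𝔘 and let c be the minimal integer with (c,a,ℓ+1) ∈ 𝔘. If (c,b) ≠ (1,N), then (c,b,ℓ) is a diagonal of Π^p lying in 𝔘^⊥. -/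
/-- Lemma 4.11: if `𝔘` is a Ptolemy diagram, `b` is maximal with `(a,b,ℓ) ∈ 𝔘` and `c` is
minimal with `(c,a,ℓ+1) ∈ 𝔘`, then `(c,b,ℓ)` is a diagonal of `Π^p` lying in `𝔘^⊥`. -/
theorem mem_rPerp_of_max_min (n p : ℕ) (hn : 1 ≤ n) (hp : 2 ≤ p)
    (U : Set (Diag p)) (hU : ∀ d ∈ U, IsDiagonal n p d) (hPt : IsPtolemy n p U)
    (a : ℤ) (ha : 1 ≤ a ∧ a ≤ (n : ℤ) + 3) (ℓ : ZMod p)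
    (b c : ℤ)
    (hb : (a, b, ℓ) ∈ U) (hbmax : ∀ b', (a, b', ℓ) ∈ U → b' ≤ b)
    (hc : (c, a, ℓ + 1) ∈ U) (hcmin : ∀ c', (c', a, ℓ + 1) ∈ U → c ≤ c')
    (hcb : ¬(c = 1 ∧ b = (n : ℤ) + 3)) :
    (c, b, ℓ) ∈ rPerp n p U := by
  obtain ⟨ha1, hab, hbN, hba2, -⟩ := hU _ hb
  obtain ⟨hc1, hca, haN, hac2, -⟩ := hU _ hc
  refine ⟨⟨hc1, by linarith, hbN, by linarith, fun h => hcb ⟨h.1, h.2⟩⟩, ?_⟩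
  rintro ⟨i, j, m⟩ hv hcross
  obtain ⟨hi1, hij, hjN, hji2, -⟩ := hU _ hv
  simp only [IsDiagonal] at *
  simp only [Crosses] at hcross
  rcases hcross with ⟨hm, hcase⟩ | ⟨hm, h1, h2, h3⟩ | ⟨hm, h1, h2, h3⟩
  · rcases hcase with ⟨h1, h2, h3⟩ | ⟨h1, h2, h3⟩
    · exact Or.inl ⟨hm, h1, h2, h3⟩
    · -- m = ℓ, c < i < b < j : contradiction
      exfalso
      rcases lt_trichotomy i a with hia | hia | hia
      · have hcr : Crosses p (i, j, m) (c, a, ℓ + 1) :=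
          Or.inr (Or.inl ⟨by rw [hm], h1, hia, by linarith⟩)
        have hmem := ((hPt _ hv _ hc hcr).2.1 ⟨by rw [hm], h1, hia, by linarith⟩).2
          ⟨by linarith, by linarith, hjN, by linarith, by rintro ⟨h', -⟩; linarith⟩
        rw [hm] at hmem
        have := hbmax j hmem; linarith
      · rw [hm, hia] at hv; have := hbmax j hv; linarith
      · have hcr : Crosses p (a, b, ℓ) (i, j, m) :=
          Or.inl ⟨hm.symm, Or.inl ⟨hia, h2, h3⟩⟩
        have hmem := ((hPt _ hb _ hv hcr).1 ⟨hm.symm, Or.inl ⟨hia, h2, h3⟩⟩).2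
          ⟨ha1, by linarith, hjN, by linarith, by rintro ⟨h', -⟩; linarith⟩
        have := hbmax j hmem; linarith
  · exact Or.inr ⟨hm, h1, h2, h3⟩
  · -- m = ℓ + 1, i < c < j < b : contradiction
    exfalso
    rcases lt_trichotomy j a with hja | hja | hja
    · have hcr : Crosses p (c, a, ℓ + 1) (i, j, m) :=
        Or.inl ⟨hm.symm, Or.inr ⟨h1, h2, hja⟩⟩
      have hmem := ((hPt _ hc _ hv hcr).1 ⟨hm.symm, Or.inr ⟨h1, h2, hja⟩⟩).1
        ⟨hi1, by linarith, haN, by linarith, by rintro ⟨-, h'⟩; linarith⟩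
      have := hcmin i hmem; linarith
    · subst hja; subst hm; have := hcmin i hv; linarith
    · have hcr : Crosses p (a, b, ℓ) (i, j, m) :=
        Or.inr (Or.inl ⟨hm, by linarith, hja, h3⟩)
      have hmem := ((hPt _ hb _ hv hcr).2.1 ⟨hm, by linarith, hja, h3⟩).1
        ⟨hi1, by linarith, haN, by linarith, by rintro ⟨-, h'⟩; linarith⟩
      rw [hm] at hmem
      have := hcmin i hmem; linarith
end

section
/- Let 𝔘 be a Ptolemy diagram in the repetitive polygon Π^p, let a be a vertex with a ≠ 1 and ℓ a region index, and suppose that 𝔘 contains a diagonal of the form (a,b',ℓ) with a < b' but contains no diagonal of the form (c',a,ℓ+1) with c' < a. Let b be the maximal integer with (a,b,ℓ) ∈ 𝔘. If (a−1,b) ≠ (1,N), then (a−1,b,ℓ) is a diagonal of Π^p lying in 𝔘^⊥. -/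
lemma isDiag_mk (n p : ℕ) (i j : ℤ) (k : ZMod p) :
    IsDiagonal n p (i, j, k) ↔
      (1 ≤ i ∧ i < j ∧ j ≤ (n : ℤ) + 3 ∧ 2 ≤ j - i ∧ ¬(i = 1 ∧ j = (n : ℤ) + 3)) :=
  Iff.rfl

/-- Corollary 4.12: if `𝔘` is a Ptolemy diagram, `a ≠ 1`, `b` is maximal with `(a,b,ℓ) ∈ 𝔘`
and `𝔘` contains no diagonal of the form `(c',a,ℓ+1)`, then `(a-1,b,ℓ)` is a diagonal of
`Π^p` lying in `𝔘^⊥`. -/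
theorem mem_rPerp_of_max (n p : ℕ) (hn : 1 ≤ n) (hp : 2 ≤ p)
    (U : Set (Diag p)) (hU : ∀ d ∈ U, IsDiagonal n p d) (hPt : IsPtolemy n p U)
    (a : ℤ) (ha : 1 ≤ a ∧ a ≤ (n : ℤ) + 3) (ha1 : a ≠ 1) (ℓ : ZMod p)
    (b : ℤ)
    (hb : (a, b, ℓ) ∈ U) (hbmax : ∀ b', (a, b', ℓ) ∈ U → b' ≤ b)
    (hnoc : ∀ c', (c', a, ℓ + 1) ∉ U)
    (hab : ¬(a - 1 = 1 ∧ b = (n : ℤ) + 3)) :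
    (a - 1, b, ℓ) ∈ rPerp n p U := by
  obtain ⟨ha1', han⟩ := ha
  have hd := (isDiag_mk n p a b ℓ).mp (hU _ hb)
  obtain ⟨h1, h2, h3, h4, h5⟩ := hd
  have ha2 : 2 ≤ a := by
    rcases lt_or_eq_of_le ha1' with h | h
    · omega
    · exact absurd h.symm ha1
  refine ⟨(isDiag_mk n p (a-1) b ℓ).mpr (by omega), ?_⟩
  rintro ⟨i, j, m⟩ hv hcr
  obtain ⟨g1, g2, g3, g4, g5⟩ := (isDiag_mk n p i j m).mp (hU _ hv)
  simp only [Crosses] at hcr ⊢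
  rcases hcr with ⟨hm, hc | hc⟩ | ⟨hm, hc1, hc2, hc3⟩ | ⟨hm, hc1, hc2, hc3⟩
  · exact Or.inl ⟨hm, hc.1, hc.2.1, hc.2.2⟩
  · -- bad case A: m = ℓ, a-1 < i, i < b, b < j
    exfalso
    obtain ⟨hc1, hc2, hc3⟩ := hc
    rw [show m = ℓ from hm] at hv
    rcases eq_or_lt_of_le (by omega : a ≤ i) with h | h
    · have := hbmax j (by rwa [← h] at hv)
      omega
    · have hcross : Crosses p (a, b, ℓ) (i, j, ℓ) :=
        Or.inl ⟨rfl, Or.inl ⟨h, hc2, hc3⟩⟩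
      have hpt := (hPt _ hb _ hv hcross).1 ⟨rfl, Or.inl ⟨h, hc2, hc3⟩⟩
      have hmem : (a, j, ℓ) ∈ U := hpt.2 ((isDiag_mk n p a j ℓ).mpr (by omega))
      have := hbmax j hmem
      omega
  · exact Or.inr ⟨hm, by omega, hc2, hc3⟩
  · -- bad case B: m = ℓ + 1, i < a-1, a-1 < j, j < b
    exfalso
    rw [show m = ℓ + 1 from hm] at hv
    rcases eq_or_lt_of_le (by omega : a ≤ j) with h | h
    · exact hnoc i (by rwa [← h] at hv)
    · have hcross : Crosses p (a, b, ℓ) (i, j, ℓ + 1) :=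
        Or.inr (Or.inl ⟨rfl, show i < a by omega, h, show j < b by omega⟩)
      have hpt := (hPt _ hb _ hv hcross).2.1
        ⟨rfl, show i < a by omega, h, show j < b by omega⟩
      have hmem : (i, a, ℓ + 1) ∈ U := hpt.1 ((isDiag_mk n p i a (ℓ+1)).mpr (by omega))
      exact hnoc i hmem
end

section
/- A set 𝔘 of diagonals of the repetitive polygon Π^p is a Ptolemy diagram if and only if 𝔘 = ^⊥(𝔘^⊥). -/
def Bad (p : ℕ) (X Y : Diag p) : Prop :=
  (Y.2.2 = X.2.2 ∧ X.1 < Y.1 ∧ Y.1 < X.2.1 ∧ X.2.1 < Y.2.1) ∨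
  (Y.2.2 = X.2.2 + 1 ∧ Y.1 < X.1 ∧ X.1 < Y.2.1 ∧ Y.2.1 < X.2.1)

lemma bad_iff {p : ℕ} {x y x' y' : ℤ} {m m' : ZMod p} :
    Bad p (x,y,m) (x',y',m') ↔
      ((m' = m ∧ x < x' ∧ x' < y ∧ y < y') ∨ (m' = m + 1 ∧ x' < x ∧ x < y' ∧ y' < y)) :=
  Iff.rfl

lemma bad_crosses {p : ℕ} {X Y : Diag p} (h : Bad p X Y) : Crosses p X Y := by
  rcases h with ⟨h1, h2⟩ | h
  · exact Or.inl ⟨h1.symm, Or.inl h2⟩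
  · exact Or.inr (Or.inl h)

lemma crosses_symm {p : ℕ} {X Y : Diag p} (h : Crosses p X Y) : Crosses p Y X := by
  rcases h with ⟨h1, h2 | h2⟩ | ⟨h1, h2⟩ | ⟨h1, h2⟩
  · exact Or.inl ⟨h1.symm, Or.inr h2⟩
  · exact Or.inl ⟨h1.symm, Or.inl h2⟩
  · exact Or.inr (Or.inr ⟨h1, h2⟩)
  · exact Or.inr (Or.inl ⟨h1, h2⟩)

lemma crosses_to_bad {p : ℕ} {X Y : Diag p} (h : Crosses p X Y) :
    Bad p X Y ∨ Bad p Y X := by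
  rcases h with ⟨h1, h2 | h2⟩ | ⟨h1, h2⟩ | ⟨h1, h2⟩
  · exact Or.inl (Or.inl ⟨h1.symm, h2⟩)
  · exact Or.inr (Or.inl ⟨h1, h2⟩)
  · exact Or.inl (Or.inr ⟨h1, h2⟩)
  · exact Or.inr (Or.inr ⟨h1, h2⟩)

lemma not_bad_bad {p : ℕ} (hp : 2 ≤ p) {X Y : Diag p}
    (h1 : Bad p X Y) (h2 : Bad p Y X) : False := by
  haveI : Fact (1 < p) := ⟨by omega⟩
  rcases h1 with ⟨e1, o1⟩ | ⟨e1, o1⟩ <;> rcases h2 with ⟨e2, o2⟩ | ⟨e2, o2⟩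
  · omega
  · rw [e1] at e2
    exact one_ne_zero (left_eq_add.mp e2)
  · rw [e2] at e1
    exact one_ne_zero (left_eq_add.mp e1)
  · omega

lemma mem_rPerp_iff {n p : ℕ} (hp : 2 ≤ p) {U : Set (Diag p)} {u : Diag p}
    (hud : IsDiagonal n p u) :
    u ∈ rPerp n p U ↔ ∀ v ∈ U, ¬ Bad p u v := by
  constructor
  · intro h v hv hb
    have hc : Crosses p v u := crosses_symm (bad_crosses hb)
    have hg := h.2 v hv hc
    have hbvu : Bad p v u := by
      rcases hg with ⟨e, o⟩ | g
      · exact Or.inl ⟨e.symm, o⟩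
      · exact Or.inr g
    exact not_bad_bad hp hb hbvu
  · intro h
    refine ⟨hud, fun v hv hc => ?_⟩
    rcases crosses_to_bad hc with hb | hb
    · rcases hb with ⟨e, o⟩ | ⟨e, o⟩
      · exact Or.inl ⟨e.symm, o⟩
      · exact Or.inr ⟨e, o⟩
    · exact absurd hb (h v hv)

lemma mem_lPerp_iff {n p : ℕ} (hp : 2 ≤ p) {V : Set (Diag p)} {u : Diag p}
    (hud : IsDiagonal n p u) :
    u ∈ lPerp n p V ↔ ∀ v ∈ V, ¬ Bad p v u := by
  constructor
  · intro h v hv hb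
    have hc : Crosses p v u := bad_crosses hb
    have hg : Bad p u v := h.2 v hv hc
    exact not_bad_bad hp hb hg
  · intro h
    refine ⟨hud, fun v hv hc => ?_⟩
    rcases crosses_to_bad hc with hb | hb
    · exact absurd hb (h v hv)
    · exact hb

lemma lPerp_ptolemy (n p : ℕ) (hp : 2 ≤ p) (V : Set (Diag p)) :
    IsPtolemy n p (lPerp n p V) := by
  rintro ⟨i,j,l⟩ hX ⟨i',j',l'⟩ hY _hc
  have hXb : ∀ v ∈ V, ¬ Bad p v (i,j,l) := fun v hv => (mem_lPerp_iff hp hX.1).1 hX v hv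
  have hYb : ∀ v ∈ V, ¬ Bad p v (i',j',l') := fun v hv => (mem_lPerp_iff hp hY.1).1 hY v hv
  refine ⟨?_, ?_, ?_⟩
  · rintro ⟨hlev, ho⟩
    simp only at hlev
    subst hlev
    dsimp only at ho
    constructor
    · intro hnd
      rw [mem_lPerp_iff hp hnd]
      rintro ⟨a,b,m⟩ hv hb
      dsimp only [Bad] at hb
      rcases hb with ⟨hm, o1, o2, o3⟩ | ⟨hm, o1, o2, o3⟩
      · -- l = m, a < i', i' < b, b < j
        rcases ho with ⟨p1, p2, p3⟩ | ⟨p1, p2, p3⟩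
        · exact hYb _ hv (bad_iff.mpr (Or.inl ⟨hm, o1, o2, by omega⟩))
        · rcases lt_or_ge b j' with hbj | hbj
          · exact hYb _ hv (bad_iff.mpr (Or.inl ⟨hm, o1, o2, hbj⟩))
          · exact hXb _ hv (bad_iff.mpr (Or.inl ⟨hm, by omega, by omega, o3⟩))
      · -- l = m+1, i' < a, a < j, j < b
        rcases ho with ⟨p1, p2, p3⟩ | ⟨p1, p2, p3⟩
        · exact hXb _ hv (bad_iff.mpr (Or.inr ⟨hm, by omega, o2, o3⟩))
        · rcases lt_or_ge a j' with haj | haj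
          · exact hYb _ hv (bad_iff.mpr (Or.inr ⟨hm, o1, haj, by omega⟩))
          · exact hXb _ hv (bad_iff.mpr (Or.inr ⟨hm, by omega, o2, o3⟩))
    · intro hnd
      rw [mem_lPerp_iff hp hnd]
      rintro ⟨a,b,m⟩ hv hb
      dsimp only [Bad] at hb
      rcases hb with ⟨hm, o1, o2, o3⟩ | ⟨hm, o1, o2, o3⟩
      · -- l = m, a < i, i < b, b < j'
        rcases ho with ⟨p1, p2, p3⟩ | ⟨p1, p2, p3⟩
        · rcases lt_or_ge b j with hbj | hbj
          · exact hXb _ hv (bad_iff.mpr (Or.inl ⟨hm, o1, o2, hbj⟩))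
          · exact hYb _ hv (bad_iff.mpr (Or.inl ⟨hm, by omega, by omega, o3⟩))
        · exact hXb _ hv (bad_iff.mpr (Or.inl ⟨hm, o1, o2, by omega⟩))
      · -- l = m+1, i < a, a < j', j' < b
        rcases ho with ⟨p1, p2, p3⟩ | ⟨p1, p2, p3⟩
        · rcases lt_or_ge a j with haj | haj
          · exact hXb _ hv (bad_iff.mpr (Or.inr ⟨hm, o1, haj, by omega⟩))
          · exact hYb _ hv (bad_iff.mpr (Or.inr ⟨hm, by omega, o2, o3⟩))
        · exact hYb _ hv (bad_iff.mpr (Or.inr ⟨hm, by omega, o2, o3⟩))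
  · rintro ⟨hlev, p1, p2, p3⟩
    simp only at hlev p1 p2 p3
    constructor
    · intro hnd
      rw [mem_lPerp_iff hp hnd]
      rintro ⟨a,b,m⟩ hv hb
      dsimp only [Bad] at hb
      rcases hb with ⟨hm, o1, o2, o3⟩ | ⟨hm, o1, o2, o3⟩
      · -- l' = m, a < i', i' < b, b < i
        exact hYb _ hv (bad_iff.mpr (Or.inl ⟨hm, o1, o2, by omega⟩))
      · -- l' = m+1, i' < a, a < i, i < b ; with l' = l + 1 so m = l
        have hm2 : m = l := by
          have h0 : l + 1 = m + 1 := hlev.symm.trans hm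
          exact (add_right_cancel h0).symm
        rcases lt_or_ge b j with hbj | hbj
        · exact hXb _ hv (bad_iff.mpr (Or.inl ⟨hm2.symm, o2, o3, hbj⟩))
        · exact hYb _ hv (bad_iff.mpr (Or.inr ⟨hm, o1, by omega, by omega⟩))
    · intro hnd
      rw [mem_lPerp_iff hp hnd]
      rintro ⟨a,b,m⟩ hv hb
      dsimp only [Bad] at hb
      rcases hb with ⟨hm, o1, o2, o3⟩ | ⟨hm, o1, o2, o3⟩
      · -- l = m, a < j', j' < b, b < j
        rcases lt_or_ge a i with hai | hai
        · exact hXb _ hv (bad_iff.mpr (Or.inl ⟨hm, hai, by omega, o3⟩))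
        · have : l' = m + 1 := by rw [hlev, hm]
          exact hYb _ hv (bad_iff.mpr (Or.inr ⟨this, by omega, o1, o2⟩))
      · -- l = m+1, j' < a, a < j, j < b
        exact hXb _ hv (bad_iff.mpr (Or.inr ⟨hm, by omega, o2, o3⟩))
  · rintro ⟨hlev, p1, p2, p3⟩
    simp only at hlev p1 p2 p3
    constructor
    · intro hnd
      rw [mem_lPerp_iff hp hnd]
      rintro ⟨a,b,m⟩ hv hb
      dsimp only [Bad] at hb
      rcases hb with ⟨hm, o1, o2, o3⟩ | ⟨hm, o1, o2, o3⟩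
      · -- l = m, a < i, i < b, b < i'
        exact hXb _ hv (bad_iff.mpr (Or.inl ⟨hm, o1, o2, by omega⟩))
      · -- l = m+1, i < a, a < i', i' < b ; with l = l'+1 so m = l'
        have hm2 : m = l' := by
          have h0 : l' + 1 = m + 1 := hlev.symm.trans hm
          exact (add_right_cancel h0).symm
        rcases lt_or_ge b j' with hbj | hbj
        · exact hYb _ hv (bad_iff.mpr (Or.inl ⟨hm2.symm, o2, o3, hbj⟩))
        · exact hXb _ hv (bad_iff.mpr (Or.inr ⟨hm, o1, by omega, by omega⟩))
    · intro hnd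
      rw [mem_lPerp_iff hp hnd]
      rintro ⟨a,b,m⟩ hv hb
      dsimp only [Bad] at hb
      rcases hb with ⟨hm, o1, o2, o3⟩ | ⟨hm, o1, o2, o3⟩
      · -- l' = m, a < j, j < b, b < j'
        rcases lt_or_ge a i' with hai | hai
        · exact hYb _ hv (bad_iff.mpr (Or.inl ⟨hm, hai, by omega, o3⟩))
        · have : l = m + 1 := by rw [hlev, hm]
          exact hXb _ hv (bad_iff.mpr (Or.inr ⟨this, by omega, o1, o2⟩))
      · -- l' = m+1, j < a, a < j', j' < b
        exact hYb _ hv (bad_iff.mpr (Or.inr ⟨hm, by omega, o2, o3⟩))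

lemma subset_lPerp_rPerp (n p : ℕ) (hp : 2 ≤ p) (U : Set (Diag p))
    (hU : ∀ d ∈ U, IsDiagonal n p d) : U ⊆ lPerp n p (rPerp n p U) := by
  intro u hu
  rw [mem_lPerp_iff hp (hU u hu)]
  intro v hv hb
  exact ((mem_rPerp_iff hp hv.1).1 hv) u hu hb

lemma mkDiag {n p : ℕ} {i j : ℤ} (l : ZMod p) (h1 : 1 ≤ i) (h2 : i < j)
    (h3 : j ≤ (n : ℤ) + 3) (h4 : 2 ≤ j - i) (h5 : ¬(i = 1 ∧ j = (n : ℤ) + 3)) :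
    IsDiagonal n p (i, j, l) := ⟨h1, h2, h3, h4, h5⟩

lemma ptSame {n p : ℕ} {U : Set (Diag p)} (hPt : IsPtolemy n p U)
    {i j i' j' : ℤ} {l : ZMod p}
    (hX : ((i,j,l) : Diag p) ∈ U) (hY : ((i',j',l) : Diag p) ∈ U)
    (h1 : i < i') (h2 : i' < j) (h3 : j < j') :
    (IsDiagonal n p (i',j,l) → ((i',j,l) : Diag p) ∈ U) ∧
    (IsDiagonal n p (i,j',l) → ((i,j',l) : Diag p) ∈ U) := by
  have hc : Crosses p (i,j,l) (i',j',l) := Or.inl ⟨rfl, Or.inl ⟨h1, h2, h3⟩⟩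
  exact (hPt _ hX _ hY hc).1 ⟨rfl, Or.inl ⟨h1, h2, h3⟩⟩

lemma ptUp {n p : ℕ} {U : Set (Diag p)} (hPt : IsPtolemy n p U)
    {i j i' j' : ℤ} {l l' : ZMod p}
    (hX : ((i,j,l) : Diag p) ∈ U) (hY : ((i',j',l') : Diag p) ∈ U)
    (hlev : l = l' + 1) (h1 : i < i') (h2 : i' < j) (h3 : j < j') :
    (IsDiagonal n p (i,i',l) → ((i,i',l) : Diag p) ∈ U) ∧
    (IsDiagonal n p (j,j',l') → ((j,j',l') : Diag p) ∈ U) := by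
  have hc : Crosses p (i,j,l) (i',j',l') := Or.inr (Or.inr ⟨hlev, h1, h2, h3⟩)
  exact (hPt _ hX _ hY hc).2.2 ⟨hlev, h1, h2, h3⟩

lemma exists_min_int {P : ℤ → Prop} (b : ℤ) (hb : ∀ z, P z → b ≤ z) (hne : ∃ z, P z) :
    ∃ m, P m ∧ ∀ z, P z → m ≤ z := Int.exists_least_of_bdd ⟨b, hb⟩ hne

lemma exists_max_int {P : ℤ → Prop} (b : ℤ) (hb : ∀ z, P z → z ≤ b) (hne : ∃ z, P z) :
    ∃ m, P m ∧ ∀ z, P z → z ≤ m := Int.exists_greatest_of_bdd ⟨b, hb⟩ hne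

lemma main_sub (n p : ℕ) (hp : 2 ≤ p) (U : Set (Diag p)) (hPt : IsPtolemy n p U)
    (hU : ∀ d ∈ U, IsDiagonal n p d) (α β : ℤ) (κ : ZMod p)
    (hd : IsDiagonal n p (α, β, κ))
    (H : ∀ w : Diag p, IsDiagonal n p w → Bad p w (α, β, κ) → ∃ v ∈ U, Bad p w v) :
    ((α, β, κ) : Diag p) ∈ U := by
  have hUf : ∀ x y : ℤ, ∀ m : ZMod p, ((x,y,m) : Diag p) ∈ U →
      (1 ≤ x ∧ x < y ∧ y ≤ (n:ℤ)+3 ∧ 2 ≤ y - x ∧ ¬(x = 1 ∧ y = (n:ℤ)+3)) :=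
    fun x y m h => hU _ h
  obtain ⟨ha1, hab, hbN, hgap, hne⟩ := hd
  dsimp only at ha1 hab hbN hgap hne
  have hd : IsDiagonal n p (α, β, κ) := ⟨ha1, hab, hbN, hgap, hne⟩
  have hκ1 : κ = κ - 1 + 1 := by ring
  have H1 : ∀ a b : ℤ, 1 ≤ a → a < α → α < b → b < β →
      ∃ x y : ℤ, ∃ m : ZMod p, ((x,y,m) : Diag p) ∈ U ∧
        ((m = κ ∧ a < x ∧ x < b ∧ b < y) ∨ (m = κ + 1 ∧ x < a ∧ a < y ∧ y < b)) := by
    intro a b ha hax hxb hbb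
    obtain ⟨v, hvU, hbad⟩ := H (a,b,κ)
      (mkDiag κ ha (by omega) (by omega) (by omega) (by omega))
      (Or.inl ⟨rfl, hax, hxb, hbb⟩)
    obtain ⟨x, y, m⟩ := v
    exact ⟨x, y, m, hvU, hbad⟩
  have H2 : ∀ a b : ℤ, α < a → a < β → β < b → b ≤ (n:ℤ)+3 →
      ∃ x y : ℤ, ∃ m : ZMod p, ((x,y,m) : Diag p) ∈ U ∧
        ((m = κ - 1 ∧ a < x ∧ x < b ∧ b < y) ∨ (m = κ ∧ x < a ∧ a < y ∧ y < b)) := by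
    intro a b hax hxb hbb hbn
    obtain ⟨v, hvU, hbad⟩ := H (a,b,κ-1)
      (mkDiag (κ-1) (by omega) (by omega) hbn (by omega) (by omega))
      (Or.inr ⟨hκ1, hax, hxb, hbb⟩)
    obtain ⟨x, y, m⟩ := v
    refine ⟨x, y, m, hvU, ?_⟩
    rcases hbad with ⟨hm, h⟩ | ⟨hm, h⟩
    · exact Or.inl ⟨hm, h⟩
    · have hm' : m = κ - 1 + 1 := hm
      exact Or.inr ⟨by rw [hm']; ring, h⟩
  by_cases hβN : β = (n:ℤ) + 3
  · -- case (iii): β = N, hence 2 ≤ α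
    subst hβN
    have hα2 : 2 ≤ α := by omega
    -- n1 : Kn nonempty
    have hKn : ∃ x : ℤ, ((x, (n:ℤ)+3, κ) : Diag p) ∈ U := by
      obtain ⟨x, y, m, hvU, hc⟩ := H1 1 ((n:ℤ)+2) le_rfl (by omega) (by omega) (by omega)
      rcases hc with ⟨hm, h1, h2, h3⟩ | ⟨hm, h1, h2, h3⟩
      · rw [hm] at hvU
        have hfv := hUf x y κ hvU
        have hyN : y = (n:ℤ)+3 := by omega
        rw [hyN] at hvU
        exact ⟨x, hvU⟩
      · exfalso; have hfv := hUf x y m hvU; omega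
    -- n2 : min of Kn is ≤ α
    obtain ⟨xt, hxtU, hxtmin⟩ :=
      exists_min_int (P := fun z => ((z, (n:ℤ)+3, κ) : Diag p) ∈ U) 1
        (fun z hz => (hUf z _ κ hz).1) hKn
    have hfxt := hUf xt _ κ hxtU
    have hxtα : xt ≤ α := by
      by_contra hcon
      push_neg at hcon
      obtain ⟨x, y, m, hvU, hc⟩ := H1 1 xt le_rfl (by omega) hcon (by omega)
      rcases hc with ⟨hm, h1, h2, h3⟩ | ⟨hm, h1, h2, h3⟩
      · rw [hm] at hvU
        have hfv := hUf x y κ hvU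
        by_cases hyN : y = (n:ℤ)+3
        · rw [hyN] at hvU
          have := hxtmin x hvU; omega
        · have hP := ptSame hPt hvU hxtU h2 h3 (by omega)
          have hnd : IsDiagonal n p (x, (n:ℤ)+3, κ) :=
            mkDiag κ (by omega) (by omega) (by omega) (by omega) (by omega)
          have := hxtmin x (hP.2 hnd); omega
      · have hfv := hUf x y m hvU; omega
    -- n3 : maximize x* ≤ α in Kn
    obtain ⟨xs, ⟨hxsα, hxsU⟩, hxsmax⟩ :=
      exists_max_int (P := fun z => z ≤ α ∧ ((z, (n:ℤ)+3, κ) : Diag p) ∈ U) α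
        (fun z hz => hz.1) ⟨xt, hxtα, hxtU⟩
    have hfxs := hUf xs _ κ hxsU
    have hxs2 : 2 ≤ xs := by
      have h5 := hfxs.2.2.2.2; omega
    rcases eq_or_lt_of_le hxsα with heq | hxslt
    · rw [heq] at hxsU; exact hxsU
    -- n4
    have hW : (∃ s t : ℤ, xs < s ∧ s ≤ α ∧ α < t ∧ t < (n:ℤ)+3 ∧ ((s,t,κ) : Diag p) ∈ U) ∨
        ((α, (n:ℤ)+3, κ) : Diag p) ∈ U := by
      obtain ⟨x, y, m, hvU, hc⟩ := H1 xs (α+1) (by omega) hxslt (by omega) (by omega)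
      rcases hc with ⟨hm, h1, h2, h3⟩ | ⟨hm, h1, h2, h3⟩
      · rw [hm] at hvU
        have hfv := hUf x y κ hvU
        by_cases hyN : y = (n:ℤ)+3
        · exfalso
          rw [hyN] at hvU
          have := hxsmax x ⟨by omega, hvU⟩; omega
        · exact Or.inl ⟨x, y, by omega, by omega, by omega, by omega, hvU⟩
      · rw [hm] at hvU
        have hfv := hUf x y (κ+1) hvU
        by_cases hyα : y = α
        · rw [hyα] at hvU
          have hP := ptUp hPt hvU hxsU rfl h1 (by omega) (by omega)
          exact Or.inr (hP.2 hd)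
        · exfalso
          have hP := ptUp hPt hvU hxsU rfl h1 h2 (by omega)
          have hnd : IsDiagonal n p (y, (n:ℤ)+3, κ) :=
            mkDiag κ (by omega) (by omega) (by omega) (by omega) (by omega)
          have := hxsmax y ⟨by omega, hP.2 hnd⟩; omega
    rcases hW with ⟨s0', t0', hw1, hw2, hw3, hw4, hw5⟩ | hdone
    swap
    · exact hdone
    -- n5
    obtain ⟨t0, ⟨hαt0, ht0N, s0, hxss0, hs0α, hs0U⟩, ht0max⟩ :=
      exists_max_int (P := fun t => α < t ∧ t < (n:ℤ)+3 ∧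
          ∃ s, xs < s ∧ s ≤ α ∧ ((s,t,κ) : Diag p) ∈ U) ((n:ℤ)+3)
        (fun z hz => by have := hz.2.1; omega)
        ⟨t0', hw3, hw4, s0', hw1, hw2, hw5⟩
    have hfs0 := hUf s0 t0 κ hs0U
    obtain ⟨x, y, m, hvU, hc⟩ := H1 xs t0 (by omega) hxslt hαt0 ht0N
    rcases hc with ⟨hm, h1, h2, h3⟩ | ⟨hm, h1, h2, h3⟩
    · rw [hm] at hvU
      have hfv := hUf x y κ hvU
      by_cases hxα : x ≤ α
      · exfalso
        by_cases hyN : y = (n:ℤ)+3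
        · rw [hyN] at hvU
          have := hxsmax x ⟨hxα, hvU⟩; omega
        · have := ht0max y ⟨by omega, by omega, x, by omega, hxα, hvU⟩; omega
      · exfalso
        push_neg at hxα
        have hP := ptSame hPt hs0U hvU (by omega) h2 h3
        have hnd : IsDiagonal n p (s0, y, κ) :=
          mkDiag κ (by omega) (by omega) (by omega) (by omega) (by omega)
        have hso := hP.2 hnd
        by_cases hyN : y = (n:ℤ)+3
        · rw [hyN] at hso
          have := hxsmax s0 ⟨hs0α, hso⟩; omega
        · have := ht0max y ⟨by omega, by omega, s0, hxss0, hs0α, hso⟩; omega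
    · rw [hm] at hvU
      have hfv := hUf x y (κ+1) hvU
      rcases lt_trichotomy y α with hyα | hyα | hyα
      · exfalso
        have hP := ptUp hPt hvU hxsU rfl h1 h2 (by omega)
        have hnd : IsDiagonal n p (y, (n:ℤ)+3, κ) :=
          mkDiag κ (by omega) (by omega) (by omega) (by omega) (by omega)
        have := hxsmax y ⟨by omega, hP.2 hnd⟩; omega
      · rw [hyα] at hvU
        have hP := ptUp hPt hvU hxsU rfl h1 hxslt (by omega)
        exact hP.2 hd
      · exfalso
        have hP := ptUp hPt hvU hxsU rfl h1 h2 (by omega)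
        have hnd1 : IsDiagonal n p (y, (n:ℤ)+3, κ) :=
          mkDiag κ (by omega) (by omega) (by omega) (by omega) (by omega)
        have hyU := hP.2 hnd1
        have hP2 := ptSame hPt hs0U hyU (by omega) (by omega) ht0N
        have hnd2 : IsDiagonal n p (s0, (n:ℤ)+3, κ) :=
          mkDiag κ (by omega) (by omega) (by omega) (by omega) (by omega)
        have := hxsmax s0 ⟨hs0α, hP2.2 hnd2⟩; omega
  · -- β ≤ N - 1
    have hβ : β ≤ (n:ℤ) + 2 := by omega
    by_cases hα1 : α = 1
    · -- case (ii)
      subst hα1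
      -- m1
      have hK1 : ∃ y : ℤ, ((1, y, κ) : Diag p) ∈ U := by
        obtain ⟨x, y, m, hvU, hc⟩ := H2 2 ((n:ℤ)+3) (by omega) (by omega) (by omega) le_rfl
        rcases hc with ⟨hm, h1, h2, h3⟩ | ⟨hm, h1, h2, h3⟩
        · exfalso; have hfv := hUf x y m hvU; omega
        · rw [hm] at hvU
          have hfv := hUf x y κ hvU
          have hx1 : x = 1 := by omega
          rw [hx1] at hvU
          exact ⟨y, hvU⟩
      -- m2
      obtain ⟨yt, hytU, hytmax⟩ :=
        exists_max_int (P := fun z => ((1, z, κ) : Diag p) ∈ U) ((n:ℤ)+3)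
          (fun z hz => (hUf 1 z κ hz).2.2.1) hK1
      have hfyt := hUf 1 yt κ hytU
      have hytβ : β ≤ yt := by
        by_contra hcon
        push_neg at hcon
        obtain ⟨x, y, m, hvU, hc⟩ := H2 yt ((n:ℤ)+3) (by omega) hcon (by omega) le_rfl
        rcases hc with ⟨hm, h1, h2, h3⟩ | ⟨hm, h1, h2, h3⟩
        · have hfv := hUf x y m hvU; omega
        · rw [hm] at hvU
          have hfv := hUf x y κ hvU
          by_cases hx1 : x = 1
          · rw [hx1] at hvU
            have := hytmax y hvU; omega
          · have hP := ptSame hPt hytU hvU (by omega) h1 h2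
            have hnd : IsDiagonal n p (1, y, κ) :=
              mkDiag κ le_rfl (by omega) (by omega) (by omega) (by omega)
            have := hytmax y (hP.2 hnd); omega
      -- m3
      obtain ⟨ys, ⟨hysβ, hysU⟩, hysmin⟩ :=
        exists_min_int (P := fun z => β ≤ z ∧ ((1, z, κ) : Diag p) ∈ U) β
          (fun z hz => hz.1) ⟨yt, hytβ, hytU⟩
      have hfys := hUf 1 ys κ hysU
      rcases eq_or_lt_of_le hysβ with he | hβys
      · rw [← he] at hysU; exact hysU
      -- m4
      obtain ⟨x, y, m, hvU, hc⟩ := H2 (β-1) ys (by omega) (by omega) hβys (by omega)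
      rcases hc with ⟨hm, h1, h2, h3⟩ | ⟨hm, h1, h2, h3⟩
      · rw [hm] at hvU
        have hfv := hUf x y (κ-1) hvU
        rcases eq_or_lt_of_le (show β ≤ x by omega) with hxβ | hxβ
        · rw [← hxβ] at hvU
          have hP := ptUp hPt hysU hvU hκ1 (by omega) hβys h3
          have hnd : IsDiagonal n p (1, β, κ) :=
            mkDiag κ le_rfl (by omega) (by omega) (by omega) (by omega)
          exact hP.1 hnd
        · exfalso
          have hP := ptUp hPt hysU hvU hκ1 (by omega) h2 h3
          have hnd : IsDiagonal n p (1, x, κ) :=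
            mkDiag κ le_rfl (by omega) (by omega) (by omega) (by omega)
          have := hysmin x ⟨by omega, hP.1 hnd⟩; omega
      · rw [hm] at hvU
        have hfv := hUf x y κ hvU
        have hyβ : β ≤ y := by omega
        by_cases hx1 : x = 1
        · exfalso
          rw [hx1] at hvU
          have := hysmin y ⟨hyβ, hvU⟩; omega
        · -- m5
          obtain ⟨s0, ⟨hs01, t0, ht0β, ht0ys, hs0U⟩, hs0min⟩ :=
            exists_min_int (P := fun s => 1 < s ∧
                ∃ t, β ≤ t ∧ t < ys ∧ ((s, t, κ) : Diag p) ∈ U) 2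
              (fun z hz => by have := hz.1; omega)
              ⟨x, by omega, y, hyβ, h3, hvU⟩
          have hfs0 := hUf s0 t0 κ hs0U
          have hs0x : s0 ≤ x := hs0min x ⟨by omega, y, hyβ, h3, hvU⟩
          obtain ⟨g, h, m2, hvU2, hc2⟩ := H2 s0 ys (by omega) (by omega) hβys (by omega)
          rcases hc2 with ⟨hm2, g1, g2, g3⟩ | ⟨hm2, g1, g2, g3⟩
          · rw [hm2] at hvU2
            have hfv2 := hUf g h (κ-1) hvU2
            rcases lt_trichotomy g β with hgβ | hgβ | hgβ
            · exfalso
              have hP := ptUp hPt hysU hvU2 hκ1 (by omega) g2 g3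
              have hnd : IsDiagonal n p (1, g, κ) :=
                mkDiag κ le_rfl (by omega) (by omega) (by omega) (by omega)
              have hgU := hP.1 hnd
              have hP2 := ptSame hPt hgU hs0U (by omega) g1 (by omega)
              have hnd2 : IsDiagonal n p (1, t0, κ) :=
                mkDiag κ le_rfl (by omega) (by omega) (by omega) (by omega)
              have := hysmin t0 ⟨ht0β, hP2.2 hnd2⟩; omega
            · rw [hgβ] at hvU2
              have hP := ptUp hPt hysU hvU2 hκ1 (by omega) hβys g3
              have hnd : IsDiagonal n p (1, β, κ) :=
                mkDiag κ le_rfl (by omega) (by omega) (by omega) (by omega)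
              exact hP.1 hnd
            · exfalso
              have hP := ptUp hPt hysU hvU2 hκ1 (by omega) g2 g3
              have hnd : IsDiagonal n p (1, g, κ) :=
                mkDiag κ le_rfl (by omega) (by omega) (by omega) (by omega)
              have := hysmin g ⟨by omega, hP.1 hnd⟩; omega
          · exfalso
            rw [hm2] at hvU2
            have hfv2 := hUf g h κ hvU2
            rcases lt_or_ge h β with hhβ | hhβ
            · have hP := ptSame hPt hvU2 hs0U g1 g2 (by omega)
              have hnd : IsDiagonal n p (g, t0, κ) :=
                mkDiag κ (by omega) (by omega) (by omega) (by omega) (by omega)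
              have hgt0 := hP.2 hnd
              by_cases hg1 : g = 1
              · rw [hg1] at hgt0
                have := hysmin t0 ⟨ht0β, hgt0⟩; omega
              · have := hs0min g ⟨by omega, t0, ht0β, ht0ys, hgt0⟩; omega
            · by_cases hg1 : g = 1
              · rw [hg1] at hvU2
                have := hysmin h ⟨hhβ, hvU2⟩; omega
              · have := hs0min g ⟨by omega, h, hhβ, g3, hvU2⟩; omega
    · -- case (i): 2 ≤ α and β ≤ N-1
      have hα2 : 2 ≤ α := by omega
      -- Claim C
      have hC : ∃ x : ℤ, x ≤ α ∧ ((x, β, κ) : Diag p) ∈ U := by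
        have hSex : ∃ x : ℤ, ((x, β, κ) : Diag p) ∈ U := by
          obtain ⟨x, y, m, hvU, hc⟩ := H2 (β-1) (β+1) (by omega) (by omega) (by omega) (by omega)
          rcases hc with ⟨hm, h1, h2, h3⟩ | ⟨hm, h1, h2, h3⟩
          · rw [hm] at hvU
            have hfv := hUf x y (κ-1) hvU
            have hxβ : x = β := by omega
            rw [hxβ] at hvU
            -- c2
            obtain ⟨yh, hyhU, hyhmax⟩ :=
              exists_max_int (P := fun z => ((β, z, κ-1) : Diag p) ∈ U) ((n:ℤ)+3)
                (fun z hz => (hUf β z (κ-1) hz).2.2.1) ⟨y, hvU⟩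
            have hfyh := hUf β yh (κ-1) hyhU
            obtain ⟨x2, y2, m2, hvU2, hc2⟩ := H2 (β-1) yh (by omega) (by omega) (by omega) (by omega)
            rcases hc2 with ⟨hm2, g1, g2, g3⟩ | ⟨hm2, g1, g2, g3⟩
            · exfalso
              rw [hm2] at hvU2
              have hfv2 := hUf x2 y2 (κ-1) hvU2
              by_cases hx2β : x2 = β
              · rw [hx2β] at hvU2
                have := hyhmax y2 hvU2; omega
              · have hP := ptSame hPt hyhU hvU2 (by omega) g2 g3
                have hnd : IsDiagonal n p (β, y2, κ-1) :=
                  mkDiag (κ-1) (by omega) (by omega) (by omega) (by omega) (by omega)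
                have := hyhmax y2 (hP.2 hnd); omega
            · rw [hm2] at hvU2
              have hfv2 := hUf x2 y2 κ hvU2
              by_cases hy2β : y2 = β
              · rw [hy2β] at hvU2
                exact ⟨x2, hvU2⟩
              · have hy2β' : β < y2 := by omega
                have hP := ptUp hPt hvU2 hyhU hκ1 (by omega) hy2β' g3
                have hnd : IsDiagonal n p (x2, β, κ) :=
                  mkDiag κ (by omega) (by omega) (by omega) (by omega) (by omega)
                exact ⟨x2, hP.1 hnd⟩
          · rw [hm] at hvU
            have hfv := hUf x y κ hvU
            have hyβ : y = β := by omega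
            rw [hyβ] at hvU
            exact ⟨x, hvU⟩
        obtain ⟨xh, hxhU, hxhmin⟩ :=
          exists_min_int (P := fun z => ((z, β, κ) : Diag p) ∈ U) 1
            (fun z hz => (hUf z β κ hz).1) hSex
        by_cases hxhα : xh ≤ α
        · exact ⟨xh, hxhα, hxhU⟩
        · exfalso
          push_neg at hxhα
          have hfxh := hUf xh β κ hxhU
          have hT : ∃ x y : ℤ, x < xh ∧ β < y ∧ ((x, y, κ) : Diag p) ∈ U := by
            obtain ⟨x, y, m, hvU, hc⟩ := H1 1 xh le_rfl (by omega) hxhα (by omega)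
            rcases hc with ⟨hm, h1, h2, h3⟩ | ⟨hm, h1, h2, h3⟩
            · rw [hm] at hvU
              have hfv := hUf x y κ hvU
              rcases lt_trichotomy y β with hyβ | hyβ | hyβ
              · exfalso
                have hP := ptSame hPt hvU hxhU h2 h3 hyβ
                have hnd : IsDiagonal n p (x, β, κ) :=
                  mkDiag κ (by omega) (by omega) (by omega) (by omega) (by omega)
                have := hxhmin x (hP.2 hnd); omega
              · exfalso
                rw [hyβ] at hvU
                have := hxhmin x hvU; omega
              · exact ⟨x, y, h2, hyβ, hvU⟩
            · exfalso
              have hfv := hUf x y m hvU; omega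
          obtain ⟨y2, ⟨hy2β, x2, hx2xh, hx2U⟩, hy2min⟩ :=
            exists_min_int (P := fun z => β < z ∧ ∃ x, x < xh ∧ ((x, z, κ) : Diag p) ∈ U) β
              (fun z hz => by have := hz.1; omega)
              (by obtain ⟨x, y, hx, hy, hu⟩ := hT; exact ⟨y, hy, x, hx, hu⟩)
          have hfx2 := hUf x2 y2 κ hx2U
          obtain ⟨x, y, m, hvU, hc⟩ := H2 xh y2 hxhα (by omega) hy2β (by omega)
          rcases hc with ⟨hm, h1, h2, h3⟩ | ⟨hm, h1, h2, h3⟩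
          · rw [hm] at hvU
            have hfv := hUf x y (κ-1) hvU
            rcases lt_trichotomy x β with hxβ | hxβ | hxβ
            · have hP := ptUp hPt hxhU hvU hκ1 h1 hxβ (by omega)
              have hnd : IsDiagonal n p (β, y, κ-1) :=
                mkDiag (κ-1) (by omega) (by omega) (by omega) (by omega) (by omega)
              have hBU := hP.2 hnd
              have hP2 := ptUp hPt hx2U hBU hκ1 (by omega) hy2β h3
              have hnd2 : IsDiagonal n p (x2, β, κ) :=
                mkDiag κ (by omega) (by omega) (by omega) (by omega) (by omega)
              have := hxhmin x2 (hP2.1 hnd2); omega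
            · rw [hxβ] at hvU
              have hP2 := ptUp hPt hx2U hvU hκ1 (by omega) hy2β h3
              have hnd2 : IsDiagonal n p (x2, β, κ) :=
                mkDiag κ (by omega) (by omega) (by omega) (by omega) (by omega)
              have := hxhmin x2 (hP2.1 hnd2); omega
            · have hP := ptUp hPt hx2U hvU hκ1 (by omega) h2 h3
              have hnd : IsDiagonal n p (x2, x, κ) :=
                mkDiag κ (by omega) (by omega) (by omega) (by omega) (by omega)
              have := hy2min x ⟨hxβ, x2, hx2xh, hP.1 hnd⟩; omega
          · rw [hm] at hvU
            have hfv := hUf x y κ hvU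
            rcases lt_trichotomy y β with hyβ | hyβ | hyβ
            · have hP := ptSame hPt hvU hxhU h1 h2 hyβ
              have hnd : IsDiagonal n p (x, β, κ) :=
                mkDiag κ (by omega) (by omega) (by omega) (by omega) (by omega)
              have := hxhmin x (hP.2 hnd); omega
            · rw [hyβ] at hvU
              have := hxhmin x hvU; omega
            · have := hy2min y ⟨hyβ, x, h1, hvU⟩; omega
      -- Claim C'
      have hC' : ∃ y : ℤ, β ≤ y ∧ ((α, y, κ) : Diag p) ∈ U := by
        have hSex' : ∃ y : ℤ, ((α, y, κ) : Diag p) ∈ U := by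
          obtain ⟨x, y, m, hvU, hc⟩ := H1 (α-1) (α+1) (by omega) (by omega) (by omega) (by omega)
          rcases hc with ⟨hm, h1, h2, h3⟩ | ⟨hm, h1, h2, h3⟩
          · rw [hm] at hvU
            have hfv := hUf x y κ hvU
            have hxα : x = α := by omega
            rw [hxα] at hvU
            exact ⟨y, hvU⟩
          · rw [hm] at hvU
            have hfv := hUf x y (κ+1) hvU
            have hyα : y = α := by omega
            rw [hyα] at hvU
            -- c2'
            obtain ⟨xv, hxvU, hxvmin⟩ :=
              exists_min_int (P := fun z => ((z, α, κ+1) : Diag p) ∈ U) 1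
                (fun z hz => (hUf z α (κ+1) hz).1) ⟨x, hvU⟩
            have hfxv := hUf xv α (κ+1) hxvU
            obtain ⟨x2, y2, m2, hvU2, hc2⟩ := H1 xv (α+1) (by omega) (by omega) (by omega) (by omega)
            rcases hc2 with ⟨hm2, g1, g2, g3⟩ | ⟨hm2, g1, g2, g3⟩
            · rw [hm2] at hvU2
              have hfv2 := hUf x2 y2 κ hvU2
              by_cases hx2α : x2 = α
              · rw [hx2α] at hvU2
                exact ⟨y2, hvU2⟩
              · have hP := ptUp hPt hxvU hvU2 rfl g1 (by omega) (by omega)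
                have hnd : IsDiagonal n p (α, y2, κ) :=
                  mkDiag κ (by omega) (by omega) (by omega) (by omega) (by omega)
                exact ⟨y2, hP.2 hnd⟩
            · exfalso
              rw [hm2] at hvU2
              have hfv2 := hUf x2 y2 (κ+1) hvU2
              by_cases hy2α : y2 = α
              · rw [hy2α] at hvU2
                have := hxvmin x2 hvU2; omega
              · have hy2α' : y2 < α := by omega
                have hP := ptSame hPt hvU2 hxvU g1 g2 hy2α'
                have hnd : IsDiagonal n p (x2, α, κ+1) :=
                  mkDiag (κ+1) (by omega) (by omega) (by omega) (by omega) (by omega)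
                have := hxvmin x2 (hP.2 hnd); omega
        obtain ⟨yh, hyhU, hyhmax⟩ :=
          exists_max_int (P := fun z => ((α, z, κ) : Diag p) ∈ U) ((n:ℤ)+3)
            (fun z hz => (hUf α z κ hz).2.2.1) hSex'
        by_cases hyhβ : β ≤ yh
        · exact ⟨yh, hyhβ, hyhU⟩
        · exfalso
          push_neg at hyhβ
          have hfyh := hUf α yh κ hyhU
          have hT' : ∃ x y : ℤ, x < α ∧ yh < y ∧ ((x, y, κ) : Diag p) ∈ U := by
            obtain ⟨x, y, m, hvU, hc⟩ := H2 yh ((n:ℤ)+3) (by omega) hyhβ (by omega) le_rfl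
            rcases hc with ⟨hm, h1, h2, h3⟩ | ⟨hm, h1, h2, h3⟩
            · exfalso
              have hfv := hUf x y m hvU; omega
            · rw [hm] at hvU
              have hfv := hUf x y κ hvU
              rcases lt_trichotomy x α with hxα | hxα | hxα
              · exact ⟨x, y, hxα, by omega, hvU⟩
              · exfalso
                rw [hxα] at hvU
                have := hyhmax y hvU; omega
              · exfalso
                have hP := ptSame hPt hyhU hvU hxα h1 h2
                have hnd : IsDiagonal n p (α, y, κ) :=
                  mkDiag κ (by omega) (by omega) (by omega) (by omega) (by omega)
                have := hyhmax y (hP.2 hnd); omega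
          obtain ⟨x2, ⟨hx2α, y2, hyhy2, hx2U⟩, hx2max⟩ :=
            exists_max_int (P := fun z => z < α ∧ ∃ y, yh < y ∧ ((z, y, κ) : Diag p) ∈ U) α
              (fun z hz => by have := hz.1; omega)
              (by obtain ⟨x, y, hx, hy, hu⟩ := hT'; exact ⟨x, hx, y, hy, hu⟩)
          have hfx2 := hUf x2 y2 κ hx2U
          obtain ⟨g, h, m, hvU, hc⟩ := H1 x2 yh (by omega) hx2α (by omega) hyhβ
          rcases hc with ⟨hm, h1, h2, h3⟩ | ⟨hm, h1, h2, h3⟩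
          · rw [hm] at hvU
            have hfv := hUf g h κ hvU
            rcases lt_trichotomy g α with hgα | hgα | hgα
            · have := hx2max g ⟨hgα, h, by omega, hvU⟩; omega
            · rw [hgα] at hvU
              have := hyhmax h hvU; omega
            · have hP := ptSame hPt hyhU hvU hgα h2 h3
              have hnd : IsDiagonal n p (α, h, κ) :=
                mkDiag κ (by omega) (by omega) (by omega) (by omega) (by omega)
              have := hyhmax h (hP.2 hnd); omega
          · rw [hm] at hvU
            have hfv := hUf g h (κ+1) hvU
            rcases lt_trichotomy h α with hhα | hhα | hhα
            · have hP := ptUp hPt hvU hx2U rfl h1 h2 (by omega)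
              have hnd : IsDiagonal n p (h, y2, κ) :=
                mkDiag κ (by omega) (by omega) (by omega) (by omega) (by omega)
              have := hx2max h ⟨hhα, y2, hyhy2, hP.2 hnd⟩; omega
            · rw [hhα] at hvU
              have hP := ptUp hPt hvU hx2U rfl h1 hx2α (by omega)
              have hnd : IsDiagonal n p (α, y2, κ) :=
                mkDiag κ (by omega) (by omega) (by omega) (by omega) (by omega)
              have := hyhmax y2 (hP.2 hnd); omega
            · have hP := ptUp hPt hvU hyhU rfl (by omega) hhα h3
              have hnd : IsDiagonal n p (g, α, κ+1) :=
                mkDiag (κ+1) (by omega) (by omega) (by omega) (by omega) (by omega)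
              have hgU := hP.1 hnd
              have hP2 := ptUp hPt hgU hx2U rfl h1 hx2α (by omega)
              have hnd2 : IsDiagonal n p (α, y2, κ) :=
                mkDiag κ (by omega) (by omega) (by omega) (by omega) (by omega)
              have := hyhmax y2 (hP2.2 hnd2); omega
      -- combine
      obtain ⟨xc, hxcα, hxcU⟩ := hC
      obtain ⟨yc, hycβ, hycU⟩ := hC'
      rcases eq_or_lt_of_le hxcα with he | hlt
      · rw [he] at hxcU; exact hxcU
      · rcases eq_or_lt_of_le hycβ with he2 | hlt2
        · rw [← he2] at hycU; exact hycU
        · have hP := ptSame hPt hxcU hycU hlt (by omega) hlt2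
          exact hP.1 hd

/-- Proposition 4.14: a set `𝔘` of diagonals of `Π^p` is a Ptolemy diagram if and only if
`𝔘 = ^⊥(𝔘^⊥)`. -/
theorem isPtolemy_iff_eq_lPerp_rPerp (n p : ℕ) (hn : 1 ≤ n) (hp : 2 ≤ p)
    (U : Set (Diag p)) (hU : ∀ d ∈ U, IsDiagonal n p d) :
    IsPtolemy n p U ↔ U = lPerp n p (rPerp n p U) := by
  constructor
  · intro hPt
    refine Set.Subset.antisymm (subset_lPerp_rPerp n p hp U hU) ?_
    rintro ⟨α, β, κ⟩ hu
    have hdu : IsDiagonal n p (α, β, κ) := hu.1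
    refine main_sub n p hp U hPt hU α β κ hdu ?_
    intro w hw hbw
    by_contra hcon
    push_neg at hcon
    have hwr : w ∈ rPerp n p U := (mem_rPerp_iff hp hw).2 hcon
    exact (mem_lPerp_iff hp hdu).1 hu w hwr hbw
  · intro hEq
    rw [hEq]
    exact lPerp_ptolemy n p hp _
end

section
/- Let 𝔘 be a Ptolemy diagram in the repetitive polygon Π^p and let (i,j,ℓ) be a diagonal lying in ^⊥(𝔘^⊥) with i ≠ 1. Then 𝔘 contains a diagonal of the form (i,t,ℓ) with i < t, i.e. (i,−,ℓ) ∩ 𝔘 ≠ ∅. -/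
private lemma isDiagonal_iff (n p : ℕ) (a b : ℤ) (k : ZMod p) :
    IsDiagonal n p (a, b, k) ↔
      (1 ≤ a ∧ a < b ∧ b ≤ (n : ℤ) + 3 ∧ 2 ≤ b - a ∧ ¬(a = 1 ∧ b = (n : ℤ) + 3)) := Iff.rfl

private lemma crosses_iff (p : ℕ) (a b : ℤ) (k : ZMod p) (c d : ℤ) (m : ZMod p) :
    Crosses p (a, b, k) (c, d, m) ↔
      ((k = m ∧ ((a < c ∧ c < b ∧ b < d) ∨ (c < a ∧ a < d ∧ d < b))) ∨
       (m = k + 1 ∧ c < a ∧ a < d ∧ d < b) ∨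
       (k = m + 1 ∧ a < c ∧ c < b ∧ b < d)) := Iff.rfl

/-- If `𝔘` is a Ptolemy diagram, `(i,j,ℓ) ∈ ^⊥(𝔘^⊥)` and `i ≠ 1`, then `𝔘` contains a
diagonal of the form `(i,t,ℓ)` with `i < t`, i.e. `(i,−,ℓ) ∩ 𝔘 ≠ ∅`. -/
theorem exists_right_diag (n p : ℕ) (hn : 1 ≤ n) (hp : 2 ≤ p)
    (U : Set (Diag p)) (hU : ∀ d ∈ U, IsDiagonal n p d) (hPt : IsPtolemy n p U)
    (i j : ℤ) (ℓ : ZMod p)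
    (h : (i, j, ℓ) ∈ lPerp n p (rPerp n p U)) (hi : i ≠ 1) :
    ∃ t, i < t ∧ (i, t, ℓ) ∈ U := by
  classical
  by_contra hcon
  push_neg at hcon
  simp only [lPerp, Set.mem_setOf_eq] at h
  obtain ⟨hd, hperp⟩ := h
  obtain ⟨hi1, hij, hjN, hgap, hne⟩ := (isDiagonal_iff n p i j ℓ).mp hd
  have hi2 : 2 ≤ i := by omega
  have hone : (1 : ZMod p) ≠ 0 := by
    haveI : Fact (1 < p) := ⟨by omega⟩
    exact one_ne_zero
  have hself : ∀ m : ZMod p, ¬ m = m + 1 := fun m hm => hone (left_eq_add.mp hm)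
  -- Final step: any diagonal (c, i+1, ℓ) with c < i in rPerp U gives a contradiction.
  have final : ∀ c : ℤ, c < i → (c, i + 1, ℓ) ∈ rPerp n p U → False := by
    intro c hci hmem
    have hcr : Crosses p (c, i + 1, ℓ) (i, j, ℓ) :=
      (crosses_iff p c (i + 1) ℓ i j ℓ).mpr (Or.inl ⟨rfl, Or.inl (by omega)⟩)
    rcases hperp _ hmem hcr with ⟨_, h2, _⟩ | ⟨hz, _⟩
    · have h2' : i < c := h2
      omega
    · exact hself ℓ hz
  by_cases hA : ∃ a : ℤ, (a, i, ℓ + 1) ∈ U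
  · obtain ⟨a, ha, hmin⟩ :=
      Int.exists_least_of_bdd (P := fun a => (a, i, ℓ + 1) ∈ U)
        ⟨1, fun z hz => (hU _ hz).1⟩ hA
    obtain ⟨ha1, hai, _, hgap2, _⟩ := (isDiagonal_iff n p a i (ℓ + 1)).mp (hU _ ha)
    apply final a (by omega)
    simp only [rPerp, Set.mem_setOf_eq]
    refine ⟨(isDiagonal_iff n p a (i + 1) ℓ).mpr (by omega), ?_⟩
    rintro ⟨x, y, m⟩ hv hcr
    obtain ⟨hx1, hxy, hyN, hgv, _⟩ := (isDiagonal_iff n p x y m).mp (hU _ hv)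
    rw [crosses_iff] at hcr
    rcases hcr with ⟨hm, ⟨h1, h2, h3⟩ | ⟨h1, h2, h3⟩⟩ | ⟨hm, h1, h2, h3⟩ | ⟨hm, h1, h2, h3⟩
    · exact Or.inl ⟨hm, h1, h2, h3⟩
    · -- m = ℓ, a < x, x < i + 1, i + 1 < y
      exfalso
      rw [hm] at hv
      rcases eq_or_lt_of_le (by omega : x ≤ i) with hxe | hxl
      · exact hcon y (by omega) (hxe ▸ hv)
      · have hcross : Crosses p (a, i, ℓ + 1) (x, y, ℓ) :=
          (crosses_iff p a i (ℓ + 1) x y ℓ).mpr (Or.inr (Or.inr ⟨rfl, by omega⟩))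
        have hPt3 := (hPt _ ha _ hv hcross).2.2 ⟨rfl, h1, hxl, (by omega : i < y)⟩
        have hyU := hPt3.2 ((isDiagonal_iff n p i y ℓ).mpr (by omega))
        exact hcon y (by omega) hyU
    · exact Or.inr ⟨hm, h1, h2, h3⟩
    · -- m = ℓ + 1, x < a, a < y, y < i + 1
      exfalso
      rw [hm] at hv
      rcases eq_or_lt_of_le (by omega : y ≤ i) with hye | hyl
      · have := hmin x (hye ▸ hv)
        omega
      · have hcross : Crosses p (a, i, ℓ + 1) (x, y, ℓ + 1) :=
          (crosses_iff p a i (ℓ + 1) x y (ℓ + 1)).mpr (Or.inl ⟨rfl, Or.inr (by omega)⟩)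
        have hPt1 := (hPt _ ha _ hv hcross).1 ⟨rfl, Or.inr ⟨h1, h2, hyl⟩⟩
        have hxU := hPt1.1 ((isDiagonal_iff n p x i (ℓ + 1)).mpr (by omega))
        have := hmin x hxU
        omega
  · apply final (i - 1) (by omega)
    simp only [rPerp, Set.mem_setOf_eq]
    refine ⟨(isDiagonal_iff n p (i - 1) (i + 1) ℓ).mpr (by omega), ?_⟩
    rintro ⟨x, y, m⟩ hv hcr
    obtain ⟨hx1, hxy, hyN, hgv, _⟩ := (isDiagonal_iff n p x y m).mp (hU _ hv)
    rw [crosses_iff] at hcr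
    rcases hcr with ⟨hm, ⟨h1, h2, h3⟩ | ⟨h1, h2, h3⟩⟩ | ⟨hm, h1, h2, h3⟩ | ⟨hm, h1, h2, h3⟩
    · exact Or.inl ⟨hm, h1, h2, h3⟩
    · exfalso
      rw [hm] at hv
      have hxe : x = i := by omega
      exact hcon y (by omega) (hxe ▸ hv)
    · exact Or.inr ⟨hm, h1, h2, h3⟩
    · exfalso
      rw [hm] at hv
      have hye : y = i := by omega
      exact hA ⟨x, hye ▸ hv⟩
end

section
/- If 𝔘 is a Ptolemy diagram in the repetitive polygon Π^p, then ^⊥(𝔘^⊥) ⊆ 𝔘; that is, every diagonal lying in ^⊥(𝔘^⊥) already belongs to 𝔘. -/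
section PtolemyCore


/-- Abstract diagonal condition in an `N`-gon (excluding the edge `(1,N)`). -/
def PtolIsD (N x y : ℤ) : Prop :=
  1 ≤ x ∧ x + 2 ≤ y ∧ y ≤ N ∧ ¬(x = 1 ∧ y = N)

theorem ptolIsD_def (N x y : ℤ) : PtolIsD N x y ↔
    (1 ≤ x ∧ x + 2 ≤ y ∧ y ≤ N ∧ ¬(x = 1 ∧ y = N)) := Iff.rfl

theorem ptol_core (N a b : ℤ) (K Kp Km : ℤ → ℤ → Prop)
    (hK : ∀ x y, K x y → PtolIsD N x y)
    (hKp : ∀ x y, Kp x y → PtolIsD N x y)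
    (hKm : ∀ x y, Km x y → PtolIsD N x y)
    (C1 : ∀ i j i' j', K i j → K i' j' → i < i' → i' < j → j < j' →
      (PtolIsD N i' j → K i' j) ∧ (PtolIsD N i j' → K i j'))
    (C2 : ∀ i j s t, K i j → Kp s t → s < i → i < t → t < j →
      (PtolIsD N s i → Kp s i) ∧ (PtolIsD N t j → K t j))
    (C3 : ∀ s t i j, Km s t → K i j → i < s → s < j → j < t →
      (PtolIsD N i s → K i s) ∧ (PtolIsD N j t → Km j t))
    (hab : PtolIsD N a b)
    (HA : ∀ x y, 1 ≤ x → x < a → a < y → y < b →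
      (∃ s t, K s t ∧ x < s ∧ s < y ∧ y < t) ∨
      (∃ s t, Kp s t ∧ s < x ∧ x < t ∧ t < y))
    (HC : ∀ x y, a < x → x < b → b < y → y ≤ N →
      (∃ s t, Km s t ∧ x < s ∧ s < y ∧ y < t) ∨
      (∃ s t, K s t ∧ s < x ∧ x < t ∧ t < y)) :
    K a b := by
  obtain ⟨ha1, hab2, hbN, habN⟩ := hab
  -- Master lemma, the case `y = b`: descent on `a - x`.
  have master0 : ∀ k : ℕ, ∀ x, (a - x).toNat ≤ k → K x b → 1 ≤ x → x ≤ a → K a b := by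
    intro k
    induction k with
    | zero =>
      intro x hk hKxb _ hxa
      have hxe : x = a := by omega
      exact hxe ▸ hKxb
    | succ k IH =>
      intro x hk hKxb h1x hxa
      rcases eq_or_lt_of_le hxa with heq | hxa'
      · exact heq ▸ hKxb
      · -- inner descent: grow an element (s,t) with x < s ≤ a < t < b
        have inner2 : ∀ k2 : ℕ, ∀ s t, (b - t).toNat ≤ k2 → K s t → x < s → s ≤ a →
            a < t → t < b → ∃ z, K z b ∧ x < z ∧ z ≤ a := by
          intro k2
          induction k2 with
          | zero => intro s t hk2 _ _ _ _ htb; exfalso; omega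
          | succ k2 IH2 =>
            intro s t hk2 hKst hxs hsa hat htb
            rcases HA x t h1x hxa' hat htb with
              ⟨s1, t1, hw, hxs1, hs1t, htt1⟩ | ⟨σ, τ, hw, hσx, hxτ, hτt⟩
            · obtain ⟨hw1, hw2, hw3, hw4⟩ := hK _ _ hw
              by_cases hs1a : s1 ≤ a
              · rcases lt_trichotomy t1 b with h | h | h
                · exact IH2 s1 t1 (by omega) hw hxs1 hs1a (by omega) h
                · exact ⟨s1, h ▸ hw, hxs1, hs1a⟩
                · have hc := (C1 x b s1 t1 hKxb hw hxs1 (by omega) h).1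
                    ⟨by omega, by omega, hbN, by omega⟩
                  exact ⟨s1, hc, hxs1, hs1a⟩
              · obtain ⟨hq1, hq2, hq3, hq4⟩ := hK _ _ hKst
                have hst1 : K s t1 := (C1 s t s1 t1 hKst hw (by omega) hs1t htt1).2
                  ⟨by omega, by omega, by omega, by omega⟩
                rcases lt_trichotomy t1 b with h | h | h
                · exact IH2 s t1 (by omega) hst1 hxs hsa (by omega) h
                · exact ⟨s, h ▸ hst1, hxs, hsa⟩
                · have hc := (C1 x b s t1 hKxb hst1 hxs (by omega) h).1
                    ⟨by omega, by omega, hbN, by omega⟩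
                  exact ⟨s, hc, hxs, hsa⟩
            · obtain ⟨hw1, hw2, hw3, hw4⟩ := hKp _ _ hw
              have hτb : K τ b := (C2 x b σ τ hKxb hw hσx hxτ (by omega)).2
                ⟨by omega, by omega, hbN, by omega⟩
              by_cases hτa : τ ≤ a
              · exact ⟨τ, hτb, hxτ, hτa⟩
              · have hc := (C1 s t τ b hKst hτb (by omega) hτt htb).2
                  ⟨by omega, by omega, hbN, by omega⟩
                exact ⟨s, hc, hxs, hsa⟩
        rcases HA x (a+1) h1x hxa' (by omega) (by omega) with
          ⟨s, t, hw, hxs, hsa1, hta⟩ | ⟨σ, τ, hw, hσx, hxτ, hτa⟩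
        · obtain ⟨hw1, hw2, hw3, hw4⟩ := hK _ _ hw
          rcases lt_trichotomy t b with h | h | h
          · obtain ⟨z, hz, hxz, hza⟩ :=
              inner2 (b - t).toNat s t le_rfl hw hxs (by omega) (by omega) h
            exact IH z (by omega) hz (by omega) hza
          · exact IH s (by omega) (h ▸ hw) (by omega) (by omega)
          · have hc := (C1 x b s t hKxb hw hxs (by omega) h).1
              ⟨by omega, by omega, hbN, by omega⟩
            exact IH s (by omega) hc (by omega) (by omega)
        · obtain ⟨hw1, hw2, hw3, hw4⟩ := hKp _ _ hw
          have hτb : K τ b := (C2 x b σ τ hKxb hw hσx hxτ (by omega)).2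
            ⟨by omega, by omega, hbN, by omega⟩
          exact IH τ (by omega) hτb (by omega) (by omega)
  -- Master lemma: descent on `y - b`.
  have masterY : ∀ k : ℕ, ∀ x y, (y - b).toNat ≤ k → K x y → 1 ≤ x → x ≤ a → b ≤ y →
      K a b := by
    intro k
    induction k with
    | zero =>
      intro x y hk hKxy h1x hxa hby
      have hye : y = b := by omega
      exact master0 (a - x).toNat x le_rfl (hye ▸ hKxy) h1x hxa
    | succ k IH =>
      intro x y hk hKxy h1x hxa hby
      rcases eq_or_lt_of_le hby with heq | hby'
      · exact master0 (a - x).toNat x le_rfl (heq.symm ▸ hKxy) h1x hxa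
      · obtain ⟨hV1, hV2, hV3, hV4⟩ := hK _ _ hKxy
        have inner1 : ∀ k2 : ℕ, ∀ s t, (s - a).toNat ≤ k2 → K s t → a < s → s < b →
            b ≤ t → t < y → ∃ x' y', K x' y' ∧ 1 ≤ x' ∧ x' ≤ a ∧ b ≤ y' ∧ y' < y := by
          intro k2
          induction k2 with
          | zero => intro s t hk2 _ has _ _ _; exfalso; omega
          | succ k2 IH2 =>
            intro s t hk2 hKst has hsb hbt hty
            obtain ⟨hq1, hq2, hq3, hq4⟩ := hK _ _ hKst
            rcases HC s y has hsb hby' hV3 with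
              ⟨σ, τ, hw, hsσ, hσy, hyτ⟩ | ⟨s1, t1, hw, hs1s, hst1, ht1y⟩
            · obtain ⟨hw1, hw2, hw3, hw4⟩ := hKm _ _ hw
              have hxσ : K x σ := (C3 σ τ x y hw hKxy (by omega) hσy hyτ).1
                ⟨h1x, by omega, by omega, by omega⟩
              by_cases hbσ : b ≤ σ
              · exact ⟨x, σ, hxσ, h1x, hxa, hbσ, hσy⟩
              · have hc := (C1 x σ s t hxσ hKst (by omega) hsσ (by omega)).2
                  ⟨h1x, by omega, by omega, by omega⟩
                exact ⟨x, t, hc, h1x, hxa, hbt, hty⟩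
            · obtain ⟨hw1, hw2, hw3, hw4⟩ := hK _ _ hw
              by_cases hbt1 : b ≤ t1
              · by_cases hs1a : s1 ≤ a
                · exact ⟨s1, t1, hw, by omega, hs1a, hbt1, ht1y⟩
                · exact IH2 s1 t1 (by omega) hw (by omega) (by omega) hbt1 ht1y
              · have hs1t : K s1 t := (C1 s1 t1 s t hw hKst hs1s hst1 (by omega)).2
                  ⟨by omega, by omega, by omega, by omega⟩
                by_cases hs1a : s1 ≤ a
                · exact ⟨s1, t, hs1t, by omega, hs1a, hbt, hty⟩
                · exact IH2 s1 t (by omega) hs1t (by omega) (by omega) hbt hty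
        rcases HC (b-1) y (by omega) (by omega) hby' hV3 with
          ⟨σ, τ, hw, hsσ, hσy, hyτ⟩ | ⟨s, t, hw, hsb1, hb1t, hty⟩
        · obtain ⟨hw1, hw2, hw3, hw4⟩ := hKm _ _ hw
          have hxσ : K x σ := (C3 σ τ x y hw hKxy (by omega) hσy hyτ).1
            ⟨h1x, by omega, by omega, by omega⟩
          exact IH x σ (by omega) hxσ h1x hxa (by omega)
        · obtain ⟨hw1, hw2, hw3, hw4⟩ := hK _ _ hw
          by_cases hsa : s ≤ a
          · exact IH s t (by omega) hw (by omega) hsa (by omega)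
          · obtain ⟨x', y', hK', h1', ha', hb', hy'⟩ :=
              inner1 (s - a).toNat s t le_rfl hw (by omega) (by omega) (by omega) hty
            exact IH x' y' (by omega) hK' h1' ha' hb'
  -- Entry: find a first covering element.
  by_cases ha2 : 2 ≤ a
  · have innerA : ∀ k : ℕ, ∀ s t, (b - t).toNat ≤ k → K s t → 2 ≤ s → s ≤ a → a < t →
        K a b := by
      intro k
      induction k with
      | zero =>
        intro s t hk hKst hs2 hsa hat
        exact masterY (t - b).toNat s t le_rfl hKst (by omega) hsa (by omega)
      | succ k IH =>
        intro s t hk hKst hs2 hsa hat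
        by_cases hbt : b ≤ t
        · exact masterY (t - b).toNat s t le_rfl hKst (by omega) hsa hbt
        · obtain ⟨hq1, hq2, hq3, hq4⟩ := hK _ _ hKst
          rcases HA 1 t le_rfl (by omega) hat (by omega) with
            ⟨s1, t1, hw, h1s1, hs1t, htt1⟩ | ⟨σ, τ, hw, hσ1, _, _⟩
          · obtain ⟨hw1, hw2, hw3, hw4⟩ := hK _ _ hw
            by_cases hs1a : s1 ≤ a
            · exact IH s1 t1 (by omega) hw (by omega) hs1a (by omega)
            · have hc := (C1 s t s1 t1 hKst hw (by omega) hs1t htt1).2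
                ⟨by omega, by omega, by omega, by omega⟩
              exact IH s t1 (by omega) hc hs2 hsa (by omega)
          · exact absurd (hKp _ _ hw).1 (by omega)
    rcases HA 1 (a+1) le_rfl (by omega) (by omega) (by omega) with
      ⟨s, t, hw, h1s, hsa1, hat⟩ | ⟨σ, τ, hw, hσ1, _, _⟩
    · exact innerA (b - t).toNat s t le_rfl hw (by omega) (by omega) (by omega)
    · exact absurd (hKp _ _ hw).1 (by omega)
  · have ha1' : a = 1 := by omega
    have hbN' : b < N := by omega
    have innerC : ∀ k : ℕ, ∀ s t, (s - 1).toNat ≤ k → K s t → s < b → b ≤ t → t < N →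
        K a b := by
      intro k
      induction k with
      | zero =>
        intro s t hk hKst hsb hbt htN
        have h1 := (hK _ _ hKst).1
        exact masterY (t - b).toNat s t le_rfl hKst (by omega) (by omega) hbt
      | succ k IH =>
        intro s t hk hKst hsb hbt htN
        obtain ⟨hq1, hq2, hq3, hq4⟩ := hK _ _ hKst
        rcases eq_or_lt_of_le hq1 with hs1 | hs1'
        · exact masterY (t - b).toNat s t le_rfl hKst (by omega) (by omega) hbt
        · rcases HC s N (by omega) hsb (by omega) le_rfl with
            ⟨σ, τ, hw, _, hσN, hNτ⟩ | ⟨s1, t1, hw, hs1s, hst1, ht1N⟩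
          · exact absurd (hKm _ _ hw).2.2.1 (by omega)
          · obtain ⟨hw1, hw2, hw3, hw4⟩ := hK _ _ hw
            by_cases hbt1 : b ≤ t1
            · exact IH s1 t1 (by omega) hw (by omega) hbt1 (by omega)
            · have hc := (C1 s1 t1 s t hw hKst hs1s hst1 (by omega)).2
                ⟨by omega, by omega, by omega, by omega⟩
              exact IH s1 t (by omega) hc (by omega) hbt htN
    rcases HC (b-1) N (by omega) (by omega) hbN' le_rfl with
      ⟨σ, τ, hw, _, _, hNτ⟩ | ⟨s, t, hw, hsb1, hb1t, htN⟩
    · exact absurd (hKm _ _ hw).2.2.1 (by omega)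
    · exact innerC (s - 1).toNat s t le_rfl hw (by omega) (by omega) htN

end PtolemyCore

/-- If `𝔘` is a Ptolemy diagram in `Π^p`, then `^⊥(𝔘^⊥) ⊆ 𝔘`. -/
theorem lPerp_rPerp_subset (n p : ℕ) (hn : 1 ≤ n) (hp : 2 ≤ p)
    (U : Set (Diag p)) (hU : ∀ d ∈ U, IsDiagonal n p d) (hPt : IsPtolemy n p U) :
    lPerp n p (rPerp n p U) ⊆ U := by
  intro d hd
  obtain ⟨a, b, ℓ⟩ := d
  have hd' : IsDiagonal n p (a, b, ℓ) ∧ ∀ v ∈ rPerp n p U, Crosses p v (a, b, ℓ) →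
      (v.2.2 = ℓ ∧ a < v.1 ∧ v.1 < b ∧ b < v.2.1) ∨
      (v.2.2 = ℓ + 1 ∧ v.1 < a ∧ a < v.2.1 ∧ v.2.1 < b) := hd
  obtain ⟨hdD, hdP⟩ := hd'
  have hdD' : 1 ≤ a ∧ a < b ∧ b ≤ (n : ℤ) + 3 ∧ 2 ≤ b - a ∧
      ¬(a = 1 ∧ b = (n : ℤ) + 3) := hdD
  obtain ⟨ha1, hab', hbN, hab2, habN⟩ := hdD'
  haveI : Fact (1 < p) := ⟨hp⟩
  have hone : (1 : ZMod p) ≠ 0 := one_ne_zero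
  have hll1 : ∀ m : ZMod p, m ≠ m + 1 := by
    intro m h
    exact hone (left_eq_add.mp h)
  have hsub : ∀ m : ZMod p, m - 1 + 1 = m := fun m => sub_add_cancel m 1
  -- the H2 extraction principle
  have H2 : ∀ w1 w2 : ℤ, ∀ w3 : ZMod p, IsDiagonal n p (w1, w2, w3) →
      Crosses p (w1, w2, w3) (a, b, ℓ) →
      (¬ ((w3 = ℓ ∧ a < w1 ∧ w1 < b ∧ b < w2) ∨
          (w3 = ℓ + 1 ∧ w1 < a ∧ a < w2 ∧ w2 < b))) →
      ∃ v1 v2 : ℤ, ∃ v3 : ZMod p, (v1, v2, v3) ∈ U ∧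
        ((v3 = w3 ∧ w1 < v1 ∧ v1 < w2 ∧ w2 < v2) ∨
         (v3 = w3 + 1 ∧ v1 < w1 ∧ w1 < v2 ∧ v2 < w2)) := by
    intro w1 w2 w3 hwD hcross hnota
    by_contra hcon
    push_neg at hcon
    have hwR : (w1, w2, w3) ∈ rPerp n p U := by
      refine ⟨hwD, ?_⟩
      intro v hv hc
      obtain ⟨v1, v2, v3⟩ := v
      have hcon' := hcon v1 v2 v3 hv
      rcases hc with ⟨hr, ⟨c1, c2, c3⟩ | ⟨c1, c2, c3⟩⟩ | ⟨hr, c1, c2, c3⟩ | ⟨hr, c1, c2, c3⟩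
      · exact Or.inl ⟨hr, c1, c2, c3⟩
      · have c3' : w2 < v2 := c3
        exact absurd (hcon'.1 hr c1 c2) (by omega)
      · exact Or.inr ⟨hr, c1, c2, c3⟩
      · have c3' : v2 < w2 := c3
        exact absurd (hcon'.2 hr c1 c2) (by omega)
    exact hnota (hdP (w1, w2, w3) hwR hcross)
  -- instantiate the abstract sets
  set N : ℤ := (n : ℤ) + 3 with hNdef
  have toD : ∀ x y : ℤ, ∀ m : ZMod p, (x, y, m) ∈ U → PtolIsD N x y := by
    intro x y m h
    have h' : 1 ≤ x ∧ x < y ∧ y ≤ N ∧ 2 ≤ y - x ∧ ¬(x = 1 ∧ y = N) := hU _ h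
    rw [ptolIsD_def]
    obtain ⟨g1, g2, g3, g4, g5⟩ := h'
    exact ⟨g1, by omega, g3, g5⟩
  have ofD : ∀ x y : ℤ, ∀ m : ZMod p, PtolIsD N x y → IsDiagonal n p (x, y, m) := by
    intro x y m h
    rw [ptolIsD_def] at h
    obtain ⟨g1, g2, g3, g4⟩ := h
    have h2 : 1 ≤ x ∧ x < y ∧ y ≤ N ∧ 2 ≤ y - x ∧ ¬(x = 1 ∧ y = N) :=
      ⟨g1, by omega, g3, by omega, g4⟩
    exact h2
  have core := ptol_core N a b
    (fun i j => (i, j, ℓ) ∈ U) (fun i j => (i, j, ℓ + 1) ∈ U) (fun i j => (i, j, ℓ - 1) ∈ U)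
    (fun x y h => toD x y ℓ h) (fun x y h => toD x y (ℓ+1) h) (fun x y h => toD x y (ℓ-1) h)
    ?_ ?_ ?_ ?_ ?_ ?_
  · exact core
  · -- C1
    intro i j i' j' hX hY l1 l2 l3
    have hcr : Crosses p (i, j, ℓ) (i', j', ℓ) := Or.inl ⟨rfl, Or.inl ⟨l1, l2, l3⟩⟩
    obtain ⟨pt1, pt2, pt3⟩ := hPt (i, j, ℓ) hX (i', j', ℓ) hY hcr
    have hres : (IsDiagonal n p (i', j, ℓ) → (i', j, ℓ) ∈ U) ∧
        (IsDiagonal n p (i, j', ℓ) → (i, j', ℓ) ∈ U) := pt1 ⟨rfl, Or.inl ⟨l1, l2, l3⟩⟩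
    exact ⟨fun h => hres.1 (ofD _ _ _ h), fun h => hres.2 (ofD _ _ _ h)⟩
  · -- C2
    intro i j s t hX hY l1 l2 l3
    have hcr : Crosses p (i, j, ℓ) (s, t, ℓ + 1) := Or.inr (Or.inl ⟨rfl, l1, l2, l3⟩)
    obtain ⟨pt1, pt2, pt3⟩ := hPt (i, j, ℓ) hX (s, t, ℓ + 1) hY hcr
    have hres : (IsDiagonal n p (s, i, ℓ + 1) → (s, i, ℓ + 1) ∈ U) ∧
        (IsDiagonal n p (t, j, ℓ) → (t, j, ℓ) ∈ U) := pt2 ⟨rfl, l1, l2, l3⟩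
    exact ⟨fun h => hres.1 (ofD _ _ _ h), fun h => hres.2 (ofD _ _ _ h)⟩
  · -- C3
    intro s t i j hX hY l1 l2 l3
    have hreg : ℓ = ℓ - 1 + 1 := (hsub ℓ).symm
    have hcr : Crosses p (s, t, ℓ - 1) (i, j, ℓ) := Or.inr (Or.inl ⟨hreg, l1, l2, l3⟩)
    obtain ⟨pt1, pt2, pt3⟩ := hPt (s, t, ℓ - 1) hX (i, j, ℓ) hY hcr
    have hres : (IsDiagonal n p (i, s, ℓ) → (i, s, ℓ) ∈ U) ∧
        (IsDiagonal n p (j, t, ℓ - 1) → (j, t, ℓ - 1) ∈ U) := pt2 ⟨hreg, l1, l2, l3⟩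
    exact ⟨fun h => hres.1 (ofD _ _ _ h), fun h => hres.2 (ofD _ _ _ h)⟩
  · -- hab
    rw [ptolIsD_def]
    exact ⟨ha1, by omega, hbN, habN⟩
  · -- HA
    intro x y h1 h2 h3 h4
    have hwD0 : 1 ≤ x ∧ x < y ∧ y ≤ N ∧ 2 ≤ y - x ∧ ¬(x = 1 ∧ y = N) :=
      ⟨h1, by omega, by omega, by omega, by omega⟩
    have hwD : IsDiagonal n p (x, y, ℓ) := hwD0
    have hcr : Crosses p (x, y, ℓ) (a, b, ℓ) := Or.inl ⟨rfl, Or.inl ⟨h2, h3, h4⟩⟩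
    have hnota : ¬ ((ℓ = ℓ ∧ a < x ∧ x < b ∧ b < y) ∨
        (ℓ = ℓ + 1 ∧ x < a ∧ a < y ∧ y < b)) := by
      rintro (⟨hr, g1, g2, g3⟩ | ⟨hr, g1, g2, g3⟩)
      · omega
      · exact hll1 ℓ hr
    obtain ⟨v1, v2, v3, hvU, hvB⟩ := H2 x y ℓ hwD hcr hnota
    rcases hvB with ⟨hr, c1, c2, c3⟩ | ⟨hr, c1, c2, c3⟩
    · exact Or.inl ⟨v1, v2, hr ▸ hvU, c1, c2, c3⟩
    · exact Or.inr ⟨v1, v2, hr ▸ hvU, c1, c2, c3⟩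
  · -- HC
    intro x y h1 h2 h3 h4
    have hwD1 : 1 ≤ x ∧ x < y ∧ y ≤ N ∧ 2 ≤ y - x ∧ ¬(x = 1 ∧ y = N) :=
      ⟨by omega, by omega, h4, by omega, by omega⟩
    have hwD : IsDiagonal n p (x, y, ℓ - 1) := hwD1
    have hreg : ℓ = ℓ - 1 + 1 := (hsub ℓ).symm
    have hcr : Crosses p (x, y, ℓ - 1) (a, b, ℓ) := Or.inr (Or.inl ⟨hreg, h1, h2, h3⟩)
    have hnota : ¬ ((ℓ - 1 = ℓ ∧ a < x ∧ x < b ∧ b < y) ∨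
        (ℓ - 1 = ℓ + 1 ∧ x < a ∧ a < y ∧ y < b)) := by
      rintro (⟨hr, g1, g2, g3⟩ | ⟨hr, g1, g2, g3⟩)
      · have : (1 : ZMod p) = 0 := by
          have h0 := sub_eq_self.mp hr
          exact h0
        exact hone this
      · omega
    obtain ⟨v1, v2, v3, hvU, hvB⟩ := H2 x y (ℓ - 1) hwD hcr hnota
    rcases hvB with ⟨hr, c1, c2, c3⟩ | ⟨hr, c1, c2, c3⟩
    · exact Or.inl ⟨v1, v2, hr ▸ hvU, c1, c2, c3⟩
    · have hr' : v3 = ℓ := by rw [hr, hsub]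
      exact Or.inr ⟨v1, v2, hr' ▸ hvU, c1, c2, c3⟩
end

section
/- A set 𝔛 of diagonals of the repetitive polygon Π^p is combinatorially cluster tilting if and only if the set 𝔛₁ = {(i,j) : (i,j,1) ∈ 𝔛} is a triangulation of the regular N-gon (i.e. a maximal set of pairwise non-crossing diagonals of the N-gon) and membership in 𝔛 is independent of the region index, i.e. for every region index k and every pair (i,j): (i,j,k) ∈ 𝔛 if and only if (i,j,1) ∈ 𝔛. -/
/-- `E(X,Y)`, modelling `Ext¹(X,Y) ≠ 0` in the repetitive cluster category: for
`X = (i,j,ℓ)` and `Y = (i',j',ℓ')`, either `ℓ = ℓ'` and `i' < i < j' < j`, or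
`ℓ = ℓ' + 1 (mod p)` and `i < i' < j < j'`. -/
def ECond (p : ℕ) (X Y : Diag p) : Prop :=
  (X.2.2 = Y.2.2 ∧ Y.1 < X.1 ∧ X.1 < Y.2.1 ∧ Y.2.1 < X.2.1) ∨
  (X.2.2 = Y.2.2 + 1 ∧ X.1 < Y.1 ∧ Y.1 < X.2.1 ∧ X.2.1 < Y.2.1)

/-- A set `𝔛` of diagonals of `Π^p` is combinatorially cluster tilting if, for every
diagonal `d` of `Π^p`, `d ∈ 𝔛` iff `E(d,Y)` fails for all `Y ∈ 𝔛`, and `d ∈ 𝔛` iff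
`E(Y,d)` fails for all `Y ∈ 𝔛`. -/
def IsClusterTilting (n p : ℕ) (X : Set (Diag p)) : Prop :=
  ∀ d, IsDiagonal n p d →
    ((d ∈ X ↔ ∀ Y ∈ X, ¬ ECond p d Y) ∧ (d ∈ X ↔ ∀ Y ∈ X, ¬ ECond p Y d))

/-- A diagonal of the regular `N`-gon, `N = n + 3`: a pair `(i,j)` with `1 ≤ i < j ≤ N`,
`j - i ≥ 2` and `(i,j) ≠ (1,N)`. -/
def IsNgonDiag (n : ℕ) (d : ℤ × ℤ) : Prop :=
  1 ≤ d.1 ∧ d.1 < d.2 ∧ d.2 ≤ (n : ℤ) + 3 ∧ 2 ≤ d.2 - d.1 ∧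
    ¬(d.1 = 1 ∧ d.2 = (n : ℤ) + 3)

/-- Two diagonals `(i,j)` and `(i',j')` of the `N`-gon cross:
`i < i' < j < j'` or `i' < i < j' < j`. -/
def NgonCross (d e : ℤ × ℤ) : Prop :=
  (d.1 < e.1 ∧ e.1 < d.2 ∧ d.2 < e.2) ∨ (e.1 < d.1 ∧ d.1 < e.2 ∧ e.2 < d.2)

/-- A triangulation of the regular `N`-gon: a maximal set of pairwise non-crossing
diagonals of the `N`-gon. -/
def IsTriangulation (n : ℕ) (T : Set (ℤ × ℤ)) : Prop :=
  (∀ d ∈ T, IsNgonDiag n d) ∧ (∀ d ∈ T, ∀ e ∈ T, ¬ NgonCross d e) ∧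
    ∀ d, IsNgonDiag n d → (∀ e ∈ T, ¬ NgonCross d e) → d ∈ T

/-- A set `𝔛` of diagonals of `Π^p` is combinatorially cluster tilting iff
`𝔛₁ = {(i,j) : (i,j,1) ∈ 𝔛}` is a triangulation of the `N`-gon and membership in `𝔛` is
independent of the region index. -/
theorem isClusterTilting_iff (n p : ℕ) (hn : 1 ≤ n) (hp : 2 ≤ p)
    (X : Set (Diag p)) (hX : ∀ d ∈ X, IsDiagonal n p d) :
    IsClusterTilting n p X ↔
      (IsTriangulation n {ij : ℤ × ℤ | (ij.1, ij.2, (1 : ZMod p)) ∈ X} ∧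
        ∀ (k : ZMod p) (i j : ℤ), (i, j, k) ∈ X ↔ (i, j, (1 : ZMod p)) ∈ X) := by
  haveI : NeZero p := ⟨by omega⟩
  constructor
  · intro hCT
    have shift : ∀ (i j : ℤ) (k : ZMod p), (i, j, k) ∈ X ↔ (i, j, k + 1) ∈ X := by
      intro i j k
      constructor
      · intro h
        have hd : IsDiagonal n p (i, j, k) := hX _ h
        have hd' : IsDiagonal n p (i, j, k + 1) := hd
        apply (hCT _ hd').1.mpr
        intro Y hY hE
        rcases hE with ⟨hl, h1, h2, h3⟩ | ⟨hl, h1, h2, h3⟩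
        · exact (hCT _ hd).2.mp h Y hY (Or.inr ⟨hl.symm, h1, h2, h3⟩)
        · exact (hCT _ hd).2.mp h Y hY
            (Or.inl ⟨add_right_cancel hl.symm, h1, h2, h3⟩)
      · intro h
        have hd' : IsDiagonal n p (i, j, k + 1) := hX _ h
        have hd : IsDiagonal n p (i, j, k) := hd'
        apply (hCT _ hd).2.mpr
        intro Y hY hE
        rcases hE with ⟨hl, h1, h2, h3⟩ | ⟨hl, h1, h2, h3⟩
        · exact (hCT _ hd').1.mp h Y hY (Or.inr ⟨by rw [hl], h1, h2, h3⟩)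
        · exact (hCT _ hd').1.mp h Y hY (Or.inl ⟨hl.symm, h1, h2, h3⟩)
    have indep : ∀ (k : ZMod p) (i j : ℤ),
        (i, j, k) ∈ X ↔ (i, j, (1 : ZMod p)) ∈ X := by
      have step : ∀ (m : ℕ) (i j : ℤ),
          (i, j, (1 : ZMod p) + (m : ZMod p)) ∈ X ↔ (i, j, (1 : ZMod p)) ∈ X := by
        intro m
        induction m with
        | zero => intro i j; simp
        | succ m ih =>
          intro i j
          have he : (1 : ZMod p) + ((m + 1 : ℕ) : ZMod p)
              = ((1 : ZMod p) + (m : ZMod p)) + 1 := by push_cast; ring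
          rw [he]
          exact (shift i j _).symm.trans (ih i j)
      intro k i j
      have hk : (1 : ZMod p) + (((k - 1).val : ℕ) : ZMod p) = k := by
        rw [ZMod.natCast_val, ZMod.cast_id]; ring
      have h2 := step (k - 1).val i j
      rwa [hk] at h2
    refine ⟨⟨?_, ?_, ?_⟩, indep⟩
    · intro d hd
      exact hX _ hd
    · intro d hd e he hcross
      rcases hcross with ⟨h1, h2, h3⟩ | ⟨h1, h2, h3⟩
      · exact (hCT _ (hX _ he)).1.mp he (d.1, d.2, 1) hd (Or.inl ⟨rfl, h1, h2, h3⟩)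
      · exact (hCT _ (hX _ hd)).1.mp hd (e.1, e.2, 1) he (Or.inl ⟨rfl, h1, h2, h3⟩)
    · intro d hd hnc
      have hd' : IsDiagonal n p (d.1, d.2, (1 : ZMod p)) := hd
      apply (hCT _ hd').1.mpr
      intro Y hY hE
      obtain ⟨a, b, l⟩ := Y
      rcases hE with ⟨hl, h1, h2, h3⟩ | ⟨hl, h1, h2, h3⟩
      · exact hnc (a, b) ((indep l a b).mp hY) (Or.inr ⟨h1, h2, h3⟩)
      · exact hnc (a, b) ((indep l a b).mp hY) (Or.inl ⟨h1, h2, h3⟩)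
  · rintro ⟨⟨hT1, hT2, hT3⟩, hInd⟩
    rintro ⟨i, j, k⟩ hd
    constructor
    · constructor
      · intro h Y hY hE
        obtain ⟨a, b, l⟩ := Y
        have hij : (i, j, (1 : ZMod p)) ∈ X := (hInd k i j).mp h
        have hab : (a, b, (1 : ZMod p)) ∈ X := (hInd l a b).mp hY
        rcases hE with ⟨hl, h1, h2, h3⟩ | ⟨hl, h1, h2, h3⟩
        · exact hT2 (a, b) hab (i, j) hij (Or.inl ⟨h1, h2, h3⟩)
        · exact hT2 (i, j) hij (a, b) hab (Or.inl ⟨h1, h2, h3⟩)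
      · intro h
        refine (hInd k i j).mpr (hT3 (i, j) hd ?_)
        intro e he hcross
        rcases hcross with ⟨h1, h2, h3⟩ | ⟨h1, h2, h3⟩
        · have hY : (e.1, e.2, k - 1) ∈ X := (hInd (k - 1) e.1 e.2).mpr he
          exact h _ hY (Or.inr ⟨by ring, h1, h2, h3⟩)
        · have hY : (e.1, e.2, k) ∈ X := (hInd k e.1 e.2).mpr he
          exact h _ hY (Or.inl ⟨rfl, h1, h2, h3⟩)
    · constructor
      · intro h Y hY hE
        obtain ⟨a, b, l⟩ := Y
        have hij : (i, j, (1 : ZMod p)) ∈ X := (hInd k i j).mp h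
        have hab : (a, b, (1 : ZMod p)) ∈ X := (hInd l a b).mp hY
        rcases hE with ⟨hl, h1, h2, h3⟩ | ⟨hl, h1, h2, h3⟩
        · exact hT2 (i, j) hij (a, b) hab (Or.inl ⟨h1, h2, h3⟩)
        · exact hT2 (a, b) hab (i, j) hij (Or.inl ⟨h1, h2, h3⟩)
      · intro h
        refine (hInd k i j).mpr (hT3 (i, j) hd ?_)
        intro e he hcross
        rcases hcross with ⟨h1, h2, h3⟩ | ⟨h1, h2, h3⟩
        · have hY : (e.1, e.2, k) ∈ X := (hInd k e.1 e.2).mpr he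
          exact h _ hY (Or.inl ⟨rfl, h1, h2, h3⟩)
        · have hY : (e.1, e.2, k + 1) ∈ X := (hInd (k + 1) e.1 e.2).mpr he
          exact h _ hY (Or.inr ⟨rfl, h1, h2, h3⟩)
end
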